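/- arXiv:1812.08420 — 9 statements merged into one kernel-verified Lean document; each statement's English description precedes it below -/
import Mathlib

section
/- Let G be a diameter-2-critical graph with a dominating edge uv. Then either P_uv ∩ N(u) = ∅ or P_uv ∩ N(v) = ∅ (or both). -/
variable {V : Type*}

/-- A graph has diameter at most 2: every two vertices are joined by a walk of length ≤ 2. -/
def DiamAtMostTwo (G : SimpleGraph V) : Prop :=
  ∀ x y : V, ∃ w : G.Walk x y, w.length ≤ 2

/-- A graph is diameter-2-critical: its diameter is 2 and deleting any edge increases it. -/
def IsD2C (G : SimpleGraph V) : Prop :=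
  DiamAtMostTwo G ∧ (∃ x y : V, x ≠ y ∧ ¬ G.Adj x y) ∧
    ∀ e ∈ G.edgeSet, ¬ DiamAtMostTwo (G.deleteEdges {e})

/-- `uv` is a dominating edge: every vertex is `u`, `v`, or adjacent to one of them. -/
def IsDominatingEdge (G : SimpleGraph V) (u v : V) : Prop :=
  G.Adj u v ∧ ∀ x : V, x = u ∨ x = v ∨ G.Adj u x ∨ G.Adj v x

/-- `e` is critical for the pair `{x,y}`: `x ≠ y`, they are at distance at most 2,
and every walk of length at most 2 from `x` to `y` uses `e`. -/
def CriticalFor (G : SimpleGraph V) (e : Sym2 V) (x y : V) : Prop :=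
  x ≠ y ∧ (∃ w : G.Walk x y, w.length ≤ 2) ∧
    ∀ w : G.Walk x y, w.length ≤ 2 → e ∈ w.edges

/-- `P_uv`: vertices `x ∉ {u,v}` such that `uv` is critical for `{x,v}` or `{x,u}`. -/
def Puv (G : SimpleGraph V) (u v : V) : Set V :=
  {x | x ≠ u ∧ x ≠ v ∧ (CriticalFor G s(u, v) x v ∨ CriticalFor G s(u, v) x u)}

/-- `S_uv`: common neighbours of `u` and `v`. -/
def Suv (G : SimpleGraph V) (u v : V) : Set V :=
  {x | G.Adj u x ∧ G.Adj v x}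

/-- `S_w = N(w) \ (P_uv ∪ S_uv ∪ {w'})`, where `{w, w'} = {u, v}`. -/
def Sside (G : SimpleGraph V) (u v w w' : V) : Set V :=
  G.neighborSet w \ (Puv G u v ∪ Suv G u v ∪ {w'})

/-- The set `X = {v} ∪ S_u ∪ P_uv ∪ S_uv`. -/
def Xset (G : SimpleGraph V) (u v : V) : Set V :=
  {v} ∪ Sside G u v u v ∪ Puv G u v ∪ Suv G u v

/-- The set `Y = {u} ∪ S_v`. -/
def Yset (G : SimpleGraph V) (u v : V) : Set V :=
  {u} ∪ Sside G u v v u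

/-- An edge of `G` with both endpoints in `X` or both endpoints in `Y`. -/
def InnerEdge (G : SimpleGraph V) (u v : V) (e : Sym2 V) : Prop :=
  e ∈ G.edgeSet ∧ ((∀ a ∈ e, a ∈ Xset G u v) ∨ (∀ a ∈ e, a ∈ Yset G u v))

/-- An edge-assignment for `(G, uv)`: an injective map sending each edge `e` inside `X`
or inside `Y` to a non-adjacent pair `{b,c}` with one vertex in `X` and one in `Y`,
where `b` is an endpoint of `e`, `c` lies in the part not containing `e`, and `e` is
critical for `{b,c}`. -/
def IsEdgeAssignment (G : SimpleGraph V) (u v : V) (f : Sym2 V → Sym2 V) : Prop :=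
  Set.InjOn f {e | InnerEdge G u v e} ∧
    ∀ e, InnerEdge G u v e →
      ∃ b c, b ∈ e ∧ ¬ G.Adj b c ∧ f e = s(b, c) ∧ CriticalFor G e b c ∧
        ((∀ a ∈ e, a ∈ Xset G u v) → b ∈ Xset G u v ∧ c ∈ Yset G u v) ∧
        ((∀ a ∈ e, a ∈ Yset G u v) → b ∈ Yset G u v ∧ c ∈ Xset G u v)

/-- The set of `f`-free pairs: non-adjacent pairs `{b,c}` with `b ∈ X`, `c ∈ Y`,
not in the image of `f`. -/
def freeSet (G : SimpleGraph V) (u v : V) (f : Sym2 V → Sym2 V) : Set (Sym2 V) :=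
  {p | (∃ b c, b ∈ Xset G u v ∧ c ∈ Yset G u v ∧ ¬ G.Adj b c ∧ p = s(b, c)) ∧
    ∀ e, InnerEdge G u v e → f e ≠ p}

/-- The `f`-orientation: an edge `ab` inside `S_u` or inside `S_v` is oriented from `a`
to `b` whenever `f(ab) = {b,c}`, i.e. `b` belongs to the image pair and `a` does not. -/
def FOrient (G : SimpleGraph V) (u v : V) (f : Sym2 V → Sym2 V) (a b : V) : Prop :=
  G.Adj a b ∧
    ((a ∈ Sside G u v u v ∧ b ∈ Sside G u v u v) ∨
      (a ∈ Sside G u v v u ∧ b ∈ Sside G u v v u)) ∧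
    b ∈ f s(a, b) ∧ a ∉ f s(a, b)

/-- The graph `H₅`: vertices `u,v,p,q,r,s = 0,1,2,3,4,5`, edges
`uv, up, uq, us, vr, vs, pq, qr`. -/
def H5 : SimpleGraph (Fin 6) :=
  SimpleGraph.fromEdgeSet {s(0, 1), s(0, 2), s(0, 3), s(0, 5), s(1, 4), s(1, 5), s(2, 3), s(3, 4)}


private lemma walk2_cases {G : SimpleGraph V} {x y : V} (w : G.Walk x y) (h : w.length ≤ 2) :
    x = y ∨ G.Adj x y ∨ ∃ z, G.Adj x z ∧ G.Adj z y := by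
  match w with
  | .nil => exact Or.inl rfl
  | .cons ha .nil => exact Or.inr (Or.inl ha)
  | .cons ha (.cons hb .nil) => exact Or.inr (Or.inr ⟨_, ha, hb⟩)
  | .cons _ (.cons _ (.cons _ w')) => simp [SimpleGraph.Walk.length_cons] at h

/-- for a D2C graph with a dominating edge `uv`, either `P_uv ∩ N(u) = ∅`
or `P_uv ∩ N(v) = ∅`. -/
theorem statement3 {V : Type*} (G : SimpleGraph V) (u v : V)
    (hG : IsD2C G) (hdom : IsDominatingEdge G u v) :
    Puv G u v ∩ G.neighborSet u = ∅ ∨ Puv G u v ∩ G.neighborSet v = ∅ := by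
  by_contra hcon
  push_neg at hcon
  obtain ⟨x, ⟨hxu, hxv, hxc⟩, hxadj⟩ := hcon.1
  obtain ⟨y, ⟨hyu, hyv, hyc⟩, hyadj⟩ := hcon.2
  have huvne : u ≠ v := G.ne_of_adj hdom.1
  have hxadj' : G.Adj u x := hxadj
  have hyadj' : G.Adj v y := hyadj
  have key : ∀ {a b c : V} (hab : G.Adj a b) (hbc : G.Adj b c),
      s(u, v) ∈ (SimpleGraph.Walk.cons hab
        (SimpleGraph.Walk.cons hbc SimpleGraph.Walk.nil)).edges ↔
      ((u = a ∧ v = b) ∨ (u = b ∧ v = a)) ∨ ((u = b ∧ v = c) ∨ (u = c ∧ v = b)) := by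
    intro a b c hab hbc
    simp only [SimpleGraph.Walk.edges_cons, SimpleGraph.Walk.edges_nil, List.mem_cons,
      List.not_mem_nil, or_false, Sym2.eq_iff]
  have key1 : ∀ {a b : V} (hab : G.Adj a b),
      s(u, v) ∈ (SimpleGraph.Walk.cons hab SimpleGraph.Walk.nil).edges ↔
      ((u = a ∧ v = b) ∨ (u = b ∧ v = a)) := by
    intro a b hab
    simp only [SimpleGraph.Walk.edges_cons, SimpleGraph.Walk.edges_nil, List.mem_cons,
      List.not_mem_nil, or_false, Sym2.eq_iff]
  have hcx : CriticalFor G s(u, v) x v := by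
    rcases hxc with h | h
    · exact h
    · have := (key1 hxadj'.symm).1 (h.2.2 _ (by simp))
      rcases this with ⟨h1, h2⟩ | ⟨h1, h2⟩
      · exact absurd h1.symm hxu
      · exact absurd h2.symm hxv
  have hcy : CriticalFor G s(u, v) y u := by
    rcases hyc with h | h
    · have := (key1 hyadj'.symm).1 (h.2.2 _ (by simp))
      rcases this with ⟨h1, h2⟩ | ⟨h1, h2⟩
      · exact absurd h1.symm hyu
      · exact absurd h1 huvne
    · exact h
  have hxnv : ¬ G.Adj x v := by
    intro h
    rcases (key1 h).1 (hcx.2.2 _ (by simp)) with ⟨h1, h2⟩ | ⟨h1, h2⟩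
    · exact hxu h1.symm
    · exact huvne h1
  have hynu : ¬ G.Adj y u := by
    intro h
    rcases (key1 h).1 (hcy.2.2 _ (by simp)) with ⟨h1, h2⟩ | ⟨h1, h2⟩
    · exact hyu h1.symm
    · exact hyv h2.symm
  obtain ⟨wxy, hwxy⟩ := hG.1 x y
  rcases walk2_cases wxy hwxy with rfl | hadj | ⟨z, hxz, hzy⟩
  · exact hynu hxadj'.symm
  · rcases (key hadj hyadj'.symm).1 (hcx.2.2 _ (by simp)) with
      (⟨h1, h2⟩ | ⟨h1, h2⟩) | (⟨h1, h2⟩ | ⟨h1, h2⟩)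
    · exact hxu h1.symm
    · exact hxv h2.symm
    · exact hyu h1.symm
    · exact huvne h1
  · rcases hdom.2 z with rfl | rfl | huz | hvz
    · exact hynu hzy.symm
    · exact hxnv hxz
    · rcases (key hzy.symm huz.symm).1 (hcy.2.2 _ (by simp)) with
        (⟨h1, h2⟩ | ⟨h1, h2⟩) | (⟨h1, h2⟩ | ⟨h1, h2⟩)
      · exact hyu h1.symm
      · exact hyv h2.symm
      · exact huvne h2.symm
      · exact hxnv (h2.symm ▸ hxz)
    · rcases (key hxz hvz.symm).1 (hcx.2.2 _ (by simp)) with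
        (⟨h1, h2⟩ | ⟨h1, h2⟩) | (⟨h1, h2⟩ | ⟨h1, h2⟩)
      · exact hxu h1.symm
      · exact hxv h2.symm
      · exact hynu (h1 ▸ hzy).symm
      · exact huvne h1
end

section
/- Let G be a diameter-2-critical graph with a dominating edge uv such that P_uv ∩ N(v) = ∅. Then there is no edge of G joining a vertex of P_uv to a vertex of N(v) \ {u}. -/
variable {V : Type*}

/-- if `P_uv ∩ N(v) = ∅`, then no edge joins `P_uv` to `N(v) \ {u}`. -/
theorem statement4 {V : Type*} (G : SimpleGraph V) (u v : V)
    (hG : IsD2C G) (hdom : IsDominatingEdge G u v)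
    (hP : Puv G u v ∩ G.neighborSet v = ∅) :
    ∀ x ∈ Puv G u v, ∀ y ∈ G.neighborSet v, y ≠ u → ¬ G.Adj x y := by
  intro x hx y hy hyu hxy
  obtain ⟨hxu, hxv, hcrit⟩ := hx
  have huv : G.Adj u v := hdom.1
  have hxnv : ¬ G.Adj v x := by
    intro h
    have hmem : x ∈ Puv G u v ∩ G.neighborSet v := ⟨⟨hxu, hxv, hcrit⟩, h⟩
    rw [hP] at hmem
    exact hmem
  rcases hcrit with ⟨hne, _, hall⟩ | ⟨hne, _, hall⟩
  · have hyv : G.Adj y v := hy.symm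
    have hmem := hall (SimpleGraph.Walk.cons hxy (SimpleGraph.Walk.cons hyv SimpleGraph.Walk.nil))
      (by simp)
    simp [SimpleGraph.Walk.edges] at hmem
    rcases hmem with (⟨h, -⟩ | ⟨-, h⟩) | (h | ⟨h, -⟩)
    · exact hxu h.symm
    · exact hxv h.symm
    · exact hyu h.symm
    · exact huv.ne h
  · obtain ⟨w0, hw0, hmem⟩ := (by
      obtain ⟨w0, hw0⟩ : ∃ w : G.Walk x u, w.length ≤ 2 := hG.1 x u
      exact ⟨w0, hw0, hall w0 hw0⟩ : ∃ w : G.Walk x u, w.length ≤ 2 ∧ s(u, v) ∈ w.edges)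
    cases w0 with
    | nil => simp at hmem
    | cons hadj p =>
      cases p with
      | nil =>
        simp [SimpleGraph.Walk.edges] at hmem
        rcases hmem with ⟨-, h⟩ | h
        · exact huv.ne h.symm
        · exact hxv h.symm
      | cons hadj2 q =>
        cases q with
        | nil =>
          simp [SimpleGraph.Walk.edges] at hmem
          rcases hmem with (⟨h, -⟩ | ⟨-, h⟩) | (⟨-, h⟩ | h)
          · exact hxu h.symm
          · exact hxv h.symm
          · exact huv.ne h.symm
          · subst h; exact hxnv hadj.symm
        | cons h3 r => simp at hw0
end

section
/- Let G be a diameter-2-critical graph with a dominating edge uv. If P_uv = ∅, then S_uv = ∅, that is, u and v have no common neighbour. -/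
variable {V : Type*}

private lemma crit_symm {G : SimpleGraph V} {e : Sym2 V} {x y : V}
    (h : CriticalFor G e x y) : CriticalFor G e y x := by
  obtain ⟨hne, ⟨w, hw⟩, hall⟩ := h
  refine ⟨hne.symm, ⟨w.reverse, by simpa using hw⟩, fun q hq => ?_⟩
  have := hall q.reverse (by simpa using hq)
  simpa using this

private lemma crit_endpoint {G : SimpleGraph V} {u v x y : V}
    (h : CriticalFor G s(u, v) x y) :
    (x = u ∨ x = v) ∨ (y = u ∨ y = v) := by
  obtain ⟨hne, ⟨w, hw⟩, hall⟩ := h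
  have hm := hall w hw
  cases w with
  | nil => simp at hm
  | cons h q =>
    cases q with
    | nil =>
      simp only [SimpleGraph.Walk.edges_cons, SimpleGraph.Walk.edges_nil,
        List.mem_singleton] at hm
      rw [Sym2.eq_iff] at hm
      tauto
    | cons h' q' =>
      cases q' with
      | nil =>
        simp only [SimpleGraph.Walk.edges_cons, SimpleGraph.Walk.edges_nil,
          List.mem_cons, List.mem_singleton, List.not_mem_nil, or_false] at hm
        rcases hm with hm | hm <;> rw [Sym2.eq_iff] at hm <;> tauto
      | cons h'' q'' =>
        simp only [SimpleGraph.Walk.length_cons] at hw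
        omega

/-- if `P_uv = ∅`, then `S_uv = ∅`. -/
theorem statement5 {V : Type*} (G : SimpleGraph V) (u v : V)
    (hG : IsD2C G) (hdom : IsDominatingEdge G u v)
    (hP : Puv G u v = ∅) :
    Suv G u v = ∅ := by
  rw [Set.eq_empty_iff_forall_notMem]
  intro wc hwc
  obtain ⟨huw, hvw⟩ := hwc
  obtain ⟨hdiam, -, hdel⟩ := hG
  have huv : G.Adj u v := hdom.1
  have h1 := hdel s(u, v) huv
  rw [DiamAtMostTwo] at h1
  push_neg at h1
  obtain ⟨x, y, hxy⟩ := h1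
  have hne : x ≠ y := by
    rintro rfl
    have := hxy SimpleGraph.Walk.nil
    simp at this
  have hall : ∀ p : G.Walk x y, p.length ≤ 2 → s(u, v) ∈ p.edges := by
    intro p hp
    by_contra hns
    have hq : ∀ e ∈ p.edges, e ∉ ({s(u, v)} : Set (Sym2 V)) := by
      intro e he hes
      rw [Set.mem_singleton_iff] at hes
      exact hns (hes ▸ he)
    have h2 := hxy (p.toDeleteEdges {s(u, v)} hq)
    rw [SimpleGraph.Walk.toDeleteEdges, SimpleGraph.Walk.length_transfer] at h2
    omega
  obtain ⟨p, hp⟩ := hdiam x y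
  have hcrit : CriticalFor G s(u, v) x y := ⟨hne, ⟨p, hp⟩, hall⟩
  -- the key contradiction when `uv` is critical for `{u, v}` itself
  have hcontra : ∀ a b : V, CriticalFor G s(u, v) a b →
      ((a = u ∧ b = v) ∨ (a = v ∧ b = u)) → False := by
    rintro a b ⟨-, -, hall'⟩ hab
    rcases hab with ⟨rfl, rfl⟩ | ⟨rfl, rfl⟩
    · have hm := hall' (SimpleGraph.Walk.cons huw (SimpleGraph.Walk.cons hvw.symm
        SimpleGraph.Walk.nil)) (by simp)
      simp only [SimpleGraph.Walk.edges_cons, SimpleGraph.Walk.edges_nil,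
        List.mem_cons, List.not_mem_nil, or_false] at hm
      rcases hm with hm | hm <;> rw [Sym2.eq_iff] at hm <;>
        rcases hm with ⟨h1, h2⟩ | ⟨h1, h2⟩ <;> subst_vars <;>
        first
          | exact G.irrefl huw
          | exact G.irrefl hvw
          | exact G.irrefl huw.symm
          | exact G.irrefl hvw.symm
    · have hm := hall' (SimpleGraph.Walk.cons hvw (SimpleGraph.Walk.cons huw.symm
        SimpleGraph.Walk.nil)) (by simp)
      simp only [SimpleGraph.Walk.edges_cons, SimpleGraph.Walk.edges_nil,
        List.mem_cons, List.not_mem_nil, or_false] at hm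
      rcases hm with hm | hm <;> rw [Sym2.eq_iff] at hm <;>
        rcases hm with ⟨h1, h2⟩ | ⟨h1, h2⟩ <;> subst_vars <;>
        first
          | exact G.irrefl huw
          | exact G.irrefl hvw
          | exact G.irrefl huw.symm
          | exact G.irrefl hvw.symm
  -- `x ∉ Puv` and `y ∉ Puv`
  have hPx : ∀ z : V, z ∉ Puv G u v := by
    intro z hz
    rw [hP] at hz
    exact hz
  -- from criticality, with `y` an endpoint in `{u,v}`, derive contradiction
  have hkey : ∀ a b : V, CriticalFor G s(u, v) a b → (b = u ∨ b = v) → False := by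
    intro a b hc hb
    by_cases ha : a = u ∨ a = v
    · apply hcontra a b hc
      rcases ha with rfl | rfl <;> rcases hb with rfl | rfl <;>
        first
          | exact absurd rfl hc.1
          | tauto
    · push_neg at ha
      apply hPx a
      refine ⟨ha.1, ha.2, ?_⟩
      rcases hb with rfl | rfl
      · exact Or.inr hc
      · exact Or.inl hc
  rcases crit_endpoint hcrit with hx | hy
  · exact hkey y x (crit_symm hcrit) hx
  · exact hkey x y hcrit hy
end

section
/- Let G be a diameter-2-critical graph with a dominating edge uv such that P_uv ∩ N(v) = ∅. If S_uv = ∅, then every vertex in S_u has a neighbour in S_v, and every vertex in S_v has a neighbour in S_u. -/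
variable {V : Type*}

private lemma walk2 {V : Type*} {G : SimpleGraph V} {a b : V} (w : G.Walk a b)
    (h : w.length ≤ 2) :
    a = b ∨ (G.Adj a b ∧ w.edges = [s(a, b)]) ∨
      ∃ c, G.Adj a c ∧ G.Adj c b ∧ w.edges = [s(a, c), s(c, b)] := by
  match w with
  | .nil => exact Or.inl rfl
  | .cons h' .nil => exact Or.inr (Or.inl ⟨h', rfl⟩)
  | .cons h' (.cons h'' .nil) => exact Or.inr (Or.inr ⟨_, h', h'', rfl⟩)
  | .cons _ (.cons _ (.cons _ w')) =>
      simp only [SimpleGraph.Walk.length_cons] at h; omega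

/-- if `P_uv ∩ N(v) = ∅` and `S_uv = ∅`, then every vertex of `S_u` has a
neighbour in `S_v` and vice versa. -/
theorem statement6 {V : Type*} (G : SimpleGraph V) (u v : V)
    (hG : IsD2C G) (hdom : IsDominatingEdge G u v)
    (hP : Puv G u v ∩ G.neighborSet v = ∅) (hS : Suv G u v = ∅) :
    (∀ x ∈ Sside G u v u v, ∃ y ∈ Sside G u v v u, G.Adj x y) ∧
      (∀ y ∈ Sside G u v v u, ∃ x ∈ Sside G u v u v, G.Adj y x) := by
  have hSuv : ∀ z : V, ¬ (G.Adj u z ∧ G.Adj v z) := by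
    intro z hz
    have : z ∈ Suv G u v := hz
    rw [hS] at this; exact this
  have hPN : ∀ z : V, G.Adj v z → z ∉ Puv G u v := by
    intro z hz hzP
    have : z ∈ Puv G u v ∩ G.neighborSet v := ⟨hzP, hz⟩
    rw [hP] at this; exact this
  constructor
  · intro x hx
    obtain ⟨hxu, hxnot⟩ := hx
    have hxu : G.Adj u x := hxu
    have hxP : x ∉ Puv G u v := fun h => hxnot (Or.inl (Or.inl h))
    have hxv : x ≠ v := fun h => hxnot (Or.inr h)
    have hxnu : x ≠ u := fun h => G.irrefl (h ▸ hxu)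
    have hxav : ¬ G.Adj x v := fun h => hSuv x ⟨hxu, h.symm⟩
    -- x ∉ Puv means ¬ CriticalFor G s(u,v) x v
    have hnc : ¬ CriticalFor G s(u, v) x v := by
      intro hc
      exact hxP ⟨hxnu, hxv, Or.inl hc⟩
    rw [CriticalFor] at hnc
    push_neg at hnc
    obtain ⟨w, hwl, hwe⟩ := hnc hxv (hG.1 x v)
    rcases walk2 w hwl with h0 | ⟨h1, _⟩ | ⟨c, hxc, hcv, hE⟩
    · exact absurd h0 hxv
    · exact absurd h1 hxav
    · rw [hE] at hwe
      simp only [List.mem_cons, List.not_mem_nil, or_false] at hwe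
      push_neg at hwe
      have hcu : c ≠ u := by
        intro h; subst h
        exact hwe.2 (by rw [Sym2.eq_iff]; tauto)
      refine ⟨c, ⟨hcv.symm, ?_⟩, hxc⟩
      intro hmem
      rcases hmem with (hc | hc) | hc
      · exact hPN c hcv.symm hc
      · exact hSuv c ⟨hc.1, hc.2⟩
      · exact hcu hc
  · intro y hy
    obtain ⟨hyv, hynot⟩ := hy
    have hyv : G.Adj v y := hyv
    have hyP : y ∉ Puv G u v := fun h => hynot (Or.inl (Or.inl h))
    have hyu : y ≠ u := fun h => hynot (Or.inr h)
    have hynv : y ≠ v := fun h => G.irrefl (h ▸ hyv)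
    have hyau : ¬ G.Adj y u := fun h => hSuv y ⟨h.symm, hyv⟩
    have hnc : ¬ CriticalFor G s(u, v) y u := by
      intro hc
      exact hyP ⟨hyu, hynv, Or.inr hc⟩
    rw [CriticalFor] at hnc
    push_neg at hnc
    obtain ⟨w, hwl, hwe⟩ := hnc hyu (hG.1 y u)
    rcases walk2 w hwl with h0 | ⟨h1, _⟩ | ⟨c, hyc, hcu, hE⟩
    · exact absurd h0 hyu
    · exact absurd h1 hyau
    · rw [hE] at hwe
      simp only [List.mem_cons, List.not_mem_nil, or_false] at hwe
      push_neg at hwe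
      have hcv : c ≠ v := by
        intro h; subst h
        exact hwe.2 (by rw [Sym2.eq_iff]; tauto)
      have hcnu : c ≠ u := fun h => G.irrefl (h ▸ hcu)
      have hcP : c ∉ Puv G u v := by
        rintro ⟨_, _, hcrit | hcrit⟩
        · -- Crit c v : but walk c - y - v avoids uv
          obtain ⟨_, _, hall⟩ := hcrit
          have hcy : G.Adj c y := hyc.symm
          have hyvadj : G.Adj y v := hyv.symm
          have := hall (SimpleGraph.Walk.cons hcy (SimpleGraph.Walk.cons hyvadj SimpleGraph.Walk.nil)) (by simp)
          simp only [SimpleGraph.Walk.edges_cons, SimpleGraph.Walk.edges_nil,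
            List.mem_cons, List.not_mem_nil, or_false] at this
          rcases this with h | h
          · rw [Sym2.eq_iff] at h
            rcases h with ⟨h1, h2⟩ | ⟨h1, h2⟩
            · exact hynv h2.symm
            · exact hyu h1.symm
          · rw [Sym2.eq_iff] at h
            rcases h with ⟨h1, h2⟩ | ⟨h1, h2⟩
            · exact hyu h1.symm
            · exact hynv h2.symm
        · -- Crit c u : but edge c - u avoids uv since c ≠ v
          obtain ⟨_, _, hall⟩ := hcrit
          have := hall (SimpleGraph.Walk.cons hcu SimpleGraph.Walk.nil) (by simp)
          simp only [SimpleGraph.Walk.edges_cons, SimpleGraph.Walk.edges_nil,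
            List.mem_cons, List.not_mem_nil, or_false] at this
          rw [Sym2.eq_iff] at this
          rcases this with ⟨h1, h2⟩ | ⟨h1, h2⟩
          · exact hcnu h1.symm
          · exact hcv h2.symm
      refine ⟨c, ⟨hcu.symm, ?_⟩, hyc⟩
      intro hmem
      rcases hmem with (hc | hc) | hc
      · exact hcP hc
      · exact hSuv c ⟨hc.1, hc.2⟩
      · exact hcv hc
end

section
/- Let G be a diameter-2-critical graph with a dominating edge uv such that P_uv = ∅. Then every vertex in S_u that has at least one neighbour in S_u has a non-neighbour in S_v, and every vertex in S_v that has at least one neighbour in S_v has a non-neighbour in S_u. -/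
variable {V : Type*}

section Proof7

variable {V : Type*}

private lemma walk_struct7 {G : SimpleGraph V} {a b : V} (w : G.Walk a b) (h : w.length ≤ 2) :
    (a = b) ∨ (∃ _ : G.Adj a b, w.edges = [s(a,b)]) ∨
      (∃ m, ∃ _ : G.Adj a m, ∃ _ : G.Adj m b, w.edges = [s(a,m), s(m,b)]) := by
  cases w with
  | nil => exact Or.inl rfl
  | cons h1 w' =>
    cases w' with
    | nil => exact Or.inr (Or.inl ⟨h1, by simp⟩)
    | cons h2 w'' =>
      cases w'' with
      | nil => exact Or.inr (Or.inr ⟨_, h1, h2, by simp⟩)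
      | cons h3 w''' =>
        exfalso
        simp only [SimpleGraph.Walk.length_cons] at h
        omega

private lemma crit_of_not_diam7 {G : SimpleGraph V} {e : Sym2 V}
    (h : ¬ DiamAtMostTwo (G.deleteEdges {e})) :
    ∃ a b : V, a ≠ b ∧ ∀ w : G.Walk a b, w.length ≤ 2 → e ∈ w.edges := by
  rw [DiamAtMostTwo] at h
  push_neg at h
  obtain ⟨a, b, hab⟩ := h
  refine ⟨a, b, ?_, ?_⟩
  · rintro rfl
    have := hab SimpleGraph.Walk.nil
    simp at this
  · intro w hw
    by_contra hne
    have hw' := hab (SimpleGraph.Walk.toDeleteEdges {e} w (fun e' he' hmem => by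
      rw [Set.mem_singleton_iff] at hmem
      exact hne (hmem ▸ he')))
    rw [SimpleGraph.Walk.length_transfer] at hw'
    omega

private lemma crit_rev7 {G : SimpleGraph V} {e : Sym2 V} {a b : V}
    (hC : ∀ w : G.Walk a b, w.length ≤ 2 → e ∈ w.edges) :
    ∀ w : G.Walk b a, w.length ≤ 2 → e ∈ w.edges := fun w hw => by
  have := hC w.reverse (by simpa using hw)
  simpa using this

private lemma no_one7 {G : SimpleGraph V} {e : Sym2 V} {a b : V} (h1 : G.Adj a b)
    (hC : ∀ w : G.Walk a b, w.length ≤ 2 → e ∈ w.edges) (hne : e ≠ s(a,b)) : False := by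
  have := hC (SimpleGraph.Walk.cons h1 SimpleGraph.Walk.nil) (by simp)
  simp at this
  exact hne this

private lemma no_two7 {G : SimpleGraph V} {e : Sym2 V} {a b m : V} (h1 : G.Adj a m)
    (h2 : G.Adj m b) (hC : ∀ w : G.Walk a b, w.length ≤ 2 → e ∈ w.edges)
    (hm1 : e ≠ s(a,m)) (hm2 : e ≠ s(m,b)) : False := by
  have := hC (SimpleGraph.Walk.cons h1 (SimpleGraph.Walk.cons h2 SimpleGraph.Walk.nil)) (by simp)
  simp at this
  tauto

private lemma classify7 {G : SimpleGraph V} {u x a b : V}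
    (hd2 : DiamAtMostTwo G) (hab : a ≠ b)
    (hC : ∀ w : G.Walk a b, w.length ≤ 2 → s(u,x) ∈ w.edges)
    (handle : ∀ c t, (t = u ∨ t = x) → c ≠ t →
      (∀ w : G.Walk c t, w.length ≤ 2 → s(u,x) ∈ w.edges) → False) : False := by
  obtain ⟨ω, hω⟩ := hd2 a b
  have hmem := hC ω hω
  rcases walk_struct7 ω hω with rfl | ⟨hadj, hedges⟩ | ⟨m, h1, h2, hedges⟩
  · exact hab rfl
  · rw [hedges] at hmem
    simp only [List.mem_singleton] at hmem
    rcases Sym2.eq_iff.mp hmem with ⟨h1, h2⟩ | ⟨h1, h2⟩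
    · exact handle a b (Or.inr h2.symm) hab hC
    · exact handle a b (Or.inl h1.symm) hab hC
  · rw [hedges] at hmem
    simp only [List.mem_cons, List.mem_singleton, List.not_mem_nil, or_false] at hmem
    rcases hmem with hmem | hmem
    · rcases Sym2.eq_iff.mp hmem with ⟨h1, _⟩ | ⟨_, h2⟩
      · exact handle b a (Or.inl h1.symm) hab.symm (crit_rev7 hC)
      · exact handle b a (Or.inr h2.symm) hab.symm (crit_rev7 hC)
    · rcases Sym2.eq_iff.mp hmem with ⟨_, h2⟩ | ⟨h1, _⟩
      · exact handle a b (Or.inr h2.symm) hab hC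
      · exact handle a b (Or.inl h1.symm) hab hC

private lemma key7 (G : SimpleGraph V) (u v x y : V)
    (hd2 : DiamAtMostTwo G)
    (hdel : ∀ e ∈ G.edgeSet, ¬ DiamAtMostTwo (G.deleteEdges {e}))
    (hdom : ∀ w, w = u ∨ w = v ∨ G.Adj u w ∨ G.Adj v w)
    (huv : G.Adj u v)
    (hSuv : ∀ w, G.Adj u w → G.Adj v w → False)
    (hP2 : ∀ w, G.Adj u w → ¬ G.Adj v w → w ≠ v → ∃ m, G.Adj w m ∧ G.Adj m v ∧ m ≠ u)
    (hxu : G.Adj u x) (hxv : x ≠ v)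
    (hxy : G.Adj x y) (hyu : G.Adj u y)
    (hall : ∀ z, G.Adj v z → z ≠ u → G.Adj x z) : False := by
  classical
  have hux : u ≠ x := hxu.ne
  have hxu' : x ≠ u := hxu.ne'
  have huv' : u ≠ v := huv.ne
  have hvu' : v ≠ u := huv.ne'
  have hvx : v ≠ x := fun h => hxv h.symm
  have hnvx : ¬ G.Adj v x := fun h => hSuv x hxu h
  have hyu' : y ≠ u := hyu.ne'
  have huy' : u ≠ y := hyu.ne
  have hyx : y ≠ x := hxy.ne'
  have hxy' : x ≠ y := hxy.ne
  obtain ⟨a, b, hab, hC⟩ := crit_of_not_diam7 (hdel s(u,x) (G.mem_edgeSet.mpr hxu))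
  refine classify7 hd2 hab hC ?_
  intro c t ht hct hCt
  rcases ht with h | h
  · -- pair {c, u}
    rw [h] at hct hCt
    by_cases hcx : c = x
    · rw [hcx] at hCt
      exact no_two7 hxy hyu.symm hCt (by rw [Ne, Sym2.eq_iff]; tauto)
        (by rw [Ne, Sym2.eq_iff]; tauto)
    · by_cases hcv : c = v
      · rw [hcv] at hCt
        exact no_one7 huv.symm hCt (by rw [Ne, Sym2.eq_iff]; tauto)
      · have hxc : x ≠ c := fun h => hcx h.symm
        by_cases hcu : G.Adj c u
        · exact no_one7 hcu hCt (by rw [Ne, Sym2.eq_iff]; tauto)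
        · have hvc : G.Adj v c := by
            rcases hdom c with rfl | rfl | h | h
            · exact absurd rfl hct
            · exact absurd rfl hcv
            · exact absurd h.symm hcu
            · exact h
          exact no_two7 hvc.symm huv.symm hCt (by rw [Ne, Sym2.eq_iff]; tauto)
            (by rw [Ne, Sym2.eq_iff]; tauto)
  · -- pair {c, x}
    rw [h] at hct hCt
    have hxc : x ≠ c := fun h => hct h.symm
    by_cases hcu : c = u
    · rw [hcu] at hCt
      exact no_two7 hyu hxy.symm hCt (by rw [Ne, Sym2.eq_iff]; tauto)
        (by rw [Ne, Sym2.eq_iff]; tauto)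
    · have huc : u ≠ c := fun h => hcu h.symm
      by_cases hcv : c = v
      · rw [hcv] at hCt
        obtain ⟨m, hxm, hmv, hmu⟩ := hP2 x hxu hnvx hxv
        have hum : u ≠ m := fun h => hmu h.symm
        exact no_two7 hmv.symm hxm.symm hCt (by rw [Ne, Sym2.eq_iff]; tauto)
          (by rw [Ne, Sym2.eq_iff]; tauto)
      · by_cases hcx : G.Adj c x
        · exact no_one7 hcx hCt (by rw [Ne, Sym2.eq_iff]; tauto)
        · by_cases hcu' : G.Adj u c
          · have hnvc : ¬ G.Adj v c := fun h => hSuv c hcu' h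
            obtain ⟨z, hcz, hzv, hzu⟩ := hP2 c hcu' hnvc hcv
            have huz : u ≠ z := fun h => hzu h.symm
            have hxz : G.Adj x z := hall z hzv.symm hzu
            exact no_two7 hcz hxz.symm hCt (by rw [Ne, Sym2.eq_iff]; tauto)
              (by rw [Ne, Sym2.eq_iff]; tauto)
          · have hvc : G.Adj v c := by
              rcases hdom c with rfl | rfl | h | h
              · exact absurd rfl hcu
              · exact absurd rfl hcv
              · exact absurd h hcu'
              · exact h
            exact hcx ((hall c hvc hcu).symm)

end Proof7

/-- if `P_uv = ∅`, then every vertex of `S_u` with a neighbour in `S_u` has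
a non-neighbour in `S_v`, and vice versa. -/
theorem statement7 {V : Type*} (G : SimpleGraph V) (u v : V)
    (hG : IsD2C G) (hdom : IsDominatingEdge G u v)
    (hP : Puv G u v = ∅) :
    (∀ x ∈ Sside G u v u v, (∃ y ∈ Sside G u v u v, G.Adj x y) →
      ∃ z ∈ Sside G u v v u, ¬ G.Adj x z) ∧
    (∀ x ∈ Sside G u v v u, (∃ y ∈ Sside G u v v u, G.Adj x y) →
      ∃ z ∈ Sside G u v u v, ¬ G.Adj x z) := by
  obtain ⟨hd2, -, hdel⟩ := hG
  obtain ⟨huv, hdomin⟩ := hdom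
  have hPuv : ∀ w, w ∉ Puv G u v := fun w hw => by rw [hP] at hw; exact hw
  have huv' : u ≠ v := huv.ne
  -- S_uv is empty
  have hSuv : ∀ w, G.Adj u w → G.Adj v w → False := by
    intro w h1 h2
    have hw1 : w ≠ u := h1.ne'
    have hw2 : w ≠ v := h2.ne'
    have huw : u ≠ w := h1.ne
    have hvw : v ≠ w := h2.ne
    obtain ⟨a, b, hab, hC⟩ := crit_of_not_diam7 (hdel s(u,v) (G.mem_edgeSet.mpr huv))
    refine classify7 hd2 hab hC ?_
    intro c t ht hct hCt
    rcases ht with h | h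
    · rw [h] at hct hCt
      by_cases hcv : c = v
      · rw [hcv] at hCt
        exact no_two7 h2 h1.symm hCt (by rw [Ne, Sym2.eq_iff]; tauto)
          (by rw [Ne, Sym2.eq_iff]; tauto)
      · exact hPuv c ⟨hct, hcv, Or.inr ⟨hct, hd2 c u, hCt⟩⟩
    · rw [h] at hct hCt
      by_cases hcu : c = u
      · rw [hcu] at hCt
        exact no_two7 h1 h2.symm hCt (by rw [Ne, Sym2.eq_iff]; tauto)
          (by rw [Ne, Sym2.eq_iff]; tauto)
      · exact hPuv c ⟨hcu, hct, Or.inl ⟨hct, hd2 c v, hCt⟩⟩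
  have hP2 : ∀ w, G.Adj u w → ¬ G.Adj v w → w ≠ v →
      ∃ m, G.Adj w m ∧ G.Adj m v ∧ m ≠ u := by
    intro w h1 h2 h3
    have hnc : ¬ CriticalFor G s(u,v) w v := fun hc => hPuv w ⟨h1.ne', h3, Or.inl hc⟩
    rw [CriticalFor] at hnc
    push_neg at hnc
    obtain ⟨ω, hlen, hnot⟩ := hnc h3 (hd2 w v)
    rcases walk_struct7 ω hlen with rfl | ⟨hadj, hedges⟩ | ⟨m, hm1, hm2, hedges⟩
    · exact absurd rfl h3
    · exact absurd hadj.symm h2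
    · refine ⟨m, hm1, hm2, fun hmu => ?_⟩
      subst hmu
      exact hnot (by rw [hedges]; simp)
  have hP2' : ∀ w, G.Adj v w → ¬ G.Adj u w → w ≠ u →
      ∃ m, G.Adj w m ∧ G.Adj m u ∧ m ≠ v := by
    intro w h1 h2 h3
    have hnc : ¬ CriticalFor G s(u,v) w u := fun hc => hPuv w ⟨h3, h1.ne', Or.inr hc⟩
    rw [CriticalFor] at hnc
    push_neg at hnc
    obtain ⟨ω, hlen, hnot⟩ := hnc h3 (hd2 w u)
    rcases walk_struct7 ω hlen with rfl | ⟨hadj, hedges⟩ | ⟨m, hm1, hm2, hedges⟩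
    · exact absurd rfl h3
    · exact absurd hadj.symm h2
    · refine ⟨m, hm1, hm2, fun hmv => ?_⟩
      subst hmv
      refine hnot (by rw [hedges]; simp [Sym2.eq_swap])
  have hmemSv : ∀ z, G.Adj v z → z ≠ u → z ∈ Sside G u v v u := by
    intro z h1 h2
    refine ⟨h1, fun hmem => ?_⟩
    simp only [Set.mem_union, Set.mem_singleton_iff] at hmem
    rcases hmem with (hm | hm) | hm
    · exact hPuv z hm
    · exact hSuv z hm.1 hm.2
    · exact h2 hm
  have hmemSu : ∀ z, G.Adj u z → z ≠ v → z ∈ Sside G u v u v := by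
    intro z h1 h2
    refine ⟨h1, fun hmem => ?_⟩
    simp only [Set.mem_union, Set.mem_singleton_iff] at hmem
    rcases hmem with (hm | hm) | hm
    · exact hPuv z hm
    · exact hSuv z hm.1 hm.2
    · exact h2 hm
  constructor
  · rintro x ⟨hxu, hxno⟩ ⟨y, ⟨hyu, -⟩, hxy⟩
    rw [SimpleGraph.mem_neighborSet] at hxu hyu
    by_contra hcon
    push_neg at hcon
    have hxv : x ≠ v := by
      intro h
      exact hxno (Set.mem_union_right _ (by rw [h]; exact Set.mem_singleton _))
    refine key7 G u v x y hd2 hdel hdomin huv hSuv hP2 hxu hxv hxy hyu ?_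
    intro z h1 h2
    exact hcon z (hmemSv z h1 h2)
  · rintro x ⟨hxv, hxno⟩ ⟨y, ⟨hyv, -⟩, hxy⟩
    rw [SimpleGraph.mem_neighborSet] at hxv hyv
    by_contra hcon
    push_neg at hcon
    have hxu : x ≠ u := by
      intro h
      exact hxno (Set.mem_union_right _ (by rw [h]; exact Set.mem_singleton _))
    have hdomin' : ∀ w, w = v ∨ w = u ∨ G.Adj v w ∨ G.Adj u w := by
      intro w; rcases hdomin w with h | h | h | h <;> tauto
    refine key7 G v u x y hd2 hdel hdomin' huv.symm (fun w a b => hSuv w b a) hP2'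
      hxv hxu hxy hyv ?_
    intro z h1 h2
    exact hcon z (hmemSu z h1 h2)
end

section
/- Let G be a diameter-2-critical graph of order n with m edges and a dominating edge uv such that P_uv ∩ N(v) = ∅, and let f be an edge-assignment for (G,uv). Then m = |X|·|Y| − free(f) = ⌊(n² − (|X| − |Y|)²)/4⌋ − free(f); in particular m ≤ ⌊n²/4⌋ − free(f). -/
variable {V : Type*}

section Aux

variable {V : Type*}

lemma mem_Sside_iff (G : SimpleGraph V) (u v w w' x : V) :
    x ∈ Sside G u v w w' ↔
      G.Adj w x ∧ x ∉ Puv G u v ∧ x ∉ Suv G u v ∧ x ≠ w' := by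
  constructor
  · rintro ⟨h1, h2⟩
    simp only [Set.mem_union, Set.mem_singleton_iff, not_or] at h2
    exact ⟨h1, h2.1.1, h2.1.2, h2.2⟩
  · rintro ⟨h1, h2, h3, h4⟩
    refine ⟨h1, ?_⟩
    simp only [Set.mem_union, Set.mem_singleton_iff, not_or]
    exact ⟨⟨h2, h3⟩, h4⟩

lemma mem_Xset_iff (G : SimpleGraph V) (u v x : V) :
    x ∈ Xset G u v ↔ x = v ∨ x ∈ Sside G u v u v ∨ x ∈ Puv G u v ∨ x ∈ Suv G u v := by
  simp [Xset, or_assoc]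

lemma mem_Yset_iff (G : SimpleGraph V) (u v x : V) :
    x ∈ Yset G u v ↔ x = u ∨ x ∈ Sside G u v v u := by
  simp [Yset]

lemma XY_disjoint (G : SimpleGraph V) (u v : V)
    (huv : G.Adj u v) (hP : Puv G u v ∩ G.neighborSet v = ∅) :
    Disjoint (Xset G u v) (Yset G u v) := by
  rw [Set.disjoint_left]
  intro x hx hy
  rw [mem_Xset_iff] at hx
  rw [mem_Yset_iff] at hy
  rcases hy with rfl | hy
  · rcases hx with rfl | hx | hx | hx
    · exact G.irrefl huv
    · exact G.irrefl hx.1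
    · exact hx.1 rfl
    · exact G.irrefl hx.1
  · obtain ⟨hxv, hyP, hyS, hyu⟩ := (mem_Sside_iff G u v v u x).mp hy
    rcases hx with rfl | hx | hx | hx
    · exact G.irrefl hxv
    · obtain ⟨hxu, _, hxS, _⟩ := (mem_Sside_iff G u v u v x).mp hx
      exact hxS ⟨hxu, hxv⟩
    · have : x ∈ Puv G u v ∩ G.neighborSet v := ⟨hx, hxv⟩
      rw [hP] at this
      exact this
    · exact hyS hx

lemma XY_cover (G : SimpleGraph V) (u v : V)
    (hdom : IsDominatingEdge G u v) (hP : Puv G u v ∩ G.neighborSet v = ∅) :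
    Xset G u v ∪ Yset G u v = Set.univ := by
  classical
  obtain ⟨huv, hall⟩ := hdom
  ext x
  simp only [Set.mem_univ, iff_true, Set.mem_union, mem_Xset_iff, mem_Yset_iff]
  by_cases hxv : x = v
  · exact Or.inl (Or.inl hxv)
  by_cases hxu : x = u
  · exact Or.inr (Or.inl hxu)
  by_cases hxP : x ∈ Puv G u v
  · exact Or.inl (Or.inr (Or.inr (Or.inl hxP)))
  by_cases hxS : x ∈ Suv G u v
  · exact Or.inl (Or.inr (Or.inr (Or.inr hxS)))
  rcases hall x with rfl | rfl | hux | hvx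
  · exact Or.inr (Or.inl rfl)
  · exact Or.inl (Or.inl rfl)
  · exact Or.inl (Or.inr (Or.inl ((mem_Sside_iff G u v u v x).mpr ⟨hux, hxP, hxS, hxv⟩)))
  · exact Or.inr (Or.inr ((mem_Sside_iff G u v v u x).mpr ⟨hvx, hxP, hxS, hxu⟩))

end Aux

/-- `m = |X|·|Y| − free(f) = ⌊(n² − (|X|−|Y|)²)/4⌋ − free(f)`, and in
particular `m ≤ ⌊n²/4⌋ − free(f)`. -/
theorem statement10 {V : Type*} [Fintype V] (G : SimpleGraph V) (u v : V)
    (hG : IsD2C G) (hdom : IsDominatingEdge G u v)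
    (hP : Puv G u v ∩ G.neighborSet v = ∅)
    (f : Sym2 V → Sym2 V) (hf : IsEdgeAssignment G u v f) :
    (G.edgeSet.ncard : ℤ) =
        ((Xset G u v).ncard : ℤ) * ((Yset G u v).ncard : ℤ) - (freeSet G u v f).ncard ∧
      (G.edgeSet.ncard : ℤ) =
        ((Fintype.card V : ℤ) ^ 2 -
            (((Xset G u v).ncard : ℤ) - ((Yset G u v).ncard : ℤ)) ^ 2) / 4 -
          (freeSet G u v f).ncard ∧
      (G.edgeSet.ncard : ℤ) ≤
        ((Fintype.card V ^ 2 / 4 : ℕ) : ℤ) - (freeSet G u v f).ncard :=  by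
  classical
  obtain ⟨huv, hall⟩ := hdom
  set X := Xset G u v with hXdef
  set Y := Yset G u v with hYdef
  have hdisj : Disjoint X Y := XY_disjoint G u v huv hP
  have hcover : X ∪ Y = Set.univ := XY_cover G u v ⟨huv, hall⟩ hP
  -- cross pairs
  set Cross : Set (Sym2 V) := (fun p : V × V => s(p.1, p.2)) '' (X ×ˢ Y) with hCross
  set Inner : Set (Sym2 V) := {e | InnerEdge G u v e} with hInner
  set CA : Set (Sym2 V) := Cross ∩ G.edgeSet with hCA
  set CN : Set (Sym2 V) := {p | ∃ b c, b ∈ X ∧ c ∈ Y ∧ ¬ G.Adj b c ∧ p = s(b, c)} with hCN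
  have hmemCross : ∀ p, p ∈ Cross ↔ ∃ b c, b ∈ X ∧ c ∈ Y ∧ p = s(b, c) := by
    intro p
    constructor
    · rintro ⟨⟨b, c⟩, ⟨hb, hc⟩, rfl⟩
      exact ⟨b, c, hb, hc, rfl⟩
    · rintro ⟨b, c, hb, hc, rfl⟩
      exact ⟨(b, c), ⟨hb, hc⟩, rfl⟩
  -- every vertex is in X or in Y
  have hXY : ∀ x : V, x ∈ X ∨ x ∈ Y := by
    intro x
    have : x ∈ X ∪ Y := by rw [hcover]; trivial
    exact this
  have hnotboth : ∀ x : V, x ∈ X → x ∈ Y → False := fun x hx hy =>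
    Set.disjoint_left.mp hdisj hx hy
  -- edge decomposition
  have hsplit : G.edgeSet = CA ∪ Inner := by
    ext e
    constructor
    · intro he
      induction e using Sym2.ind with
      | _ a b =>
        have hab : G.Adj a b := he
        rcases hXY a with ha | ha <;> rcases hXY b with hb | hb
        · refine Or.inr ⟨he, Or.inl ?_⟩
          intro c hc
          rcases Sym2.mem_iff.mp hc with rfl | rfl <;> assumption
        · refine Or.inl ⟨(hmemCross _).mpr ⟨a, b, ha, hb, rfl⟩, he⟩
        · refine Or.inl ⟨(hmemCross _).mpr ⟨b, a, hb, ha, Sym2.eq_swap⟩, he⟩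
        · refine Or.inr ⟨he, Or.inr ?_⟩
          intro c hc
          rcases Sym2.mem_iff.mp hc with rfl | rfl <;> assumption
    · rintro (⟨_, he⟩ | ⟨he, _⟩) <;> exact he
  have hdisj1 : Disjoint CA Inner := by
    rw [Set.disjoint_left]
    rintro e ⟨hec, hee⟩ ⟨_, hi⟩
    obtain ⟨b, c, hb, hc, rfl⟩ := (hmemCross _).mp hec
    rcases hi with hi | hi
    · exact hnotboth c (hi c (Sym2.mem_mk_right b c)) hc
    · exact hnotboth b hb (hi b (Sym2.mem_mk_left b c))
  -- cross decomposition
  have hsplit2 : Cross = CA ∪ CN := by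
    ext p
    constructor
    · intro hp
      obtain ⟨b, c, hb, hc, rfl⟩ := (hmemCross _).mp hp
      by_cases hadj : G.Adj b c
      · exact Or.inl ⟨hp, hadj⟩
      · exact Or.inr ⟨b, c, hb, hc, hadj, rfl⟩
    · rintro (⟨hp, _⟩ | ⟨b, c, hb, hc, _, rfl⟩)
      · exact hp
      · exact (hmemCross _).mpr ⟨b, c, hb, hc, rfl⟩
  have hdisj2 : Disjoint CA CN := by
    rw [Set.disjoint_left]
    rintro p ⟨_, hpe⟩ ⟨b, c, hb, hc, hnadj, rfl⟩
    exact hnadj hpe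
  -- CN decomposition via f
  have himg : f '' Inner ⊆ CN := by
    rintro p ⟨e, he, rfl⟩
    obtain ⟨b, c, _, hnadj, hfe, _, hX', hY'⟩ := hf.2 e he
    rcases he.2 with hi | hi
    · obtain ⟨hb, hc⟩ := hX' hi
      exact ⟨b, c, hb, hc, hnadj, hfe⟩
    · obtain ⟨hb, hc⟩ := hY' hi
      refine ⟨c, b, hc, hb, fun h => hnadj h.symm, ?_⟩
      rw [hfe, Sym2.eq_swap]
  have hsplit3 : CN = f '' Inner ∪ freeSet G u v f := by
    ext p
    constructor
    · rintro ⟨b, c, hb, hc, hnadj, rfl⟩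
      by_cases him : ∃ e ∈ Inner, f e = s(b, c)
      · obtain ⟨e, he, hfe⟩ := him
        exact Or.inl ⟨e, he, hfe⟩
      · push_neg at him
        exact Or.inr ⟨⟨b, c, hb, hc, hnadj, rfl⟩, him⟩
    · rintro (hp | hp)
      · exact himg hp
      · obtain ⟨⟨b, c, hb, hc, hnadj, rfl⟩, _⟩ := hp
        exact ⟨b, c, hb, hc, hnadj, rfl⟩
  have hdisj3 : Disjoint (f '' Inner) (freeSet G u v f) := by
    rw [Set.disjoint_left]
    rintro p ⟨e, he, rfl⟩ ⟨_, hfree⟩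
    exact hfree e he rfl
  -- cardinalities
  have hfinV : ∀ s : Set V, s.Finite := fun s => s.toFinite
  have hfinS : ∀ s : Set (Sym2 V), s.Finite := fun s => s.toFinite
  have hm : G.edgeSet.ncard = CA.ncard + Inner.ncard := by
    rw [hsplit, Set.ncard_union_eq hdisj1 (hfinS _) (hfinS _)]
  have hC : Cross.ncard = CA.ncard + CN.ncard := by
    rw [hsplit2, Set.ncard_union_eq hdisj2 (hfinS _) (hfinS _)]
  have hCN2 : CN.ncard = (f '' Inner).ncard + (freeSet G u v f).ncard := by
    rw [hsplit3, Set.ncard_union_eq hdisj3 (hfinS _) (hfinS _)]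
  have hInj : (f '' Inner).ncard = Inner.ncard := Set.ncard_image_of_injOn hf.1
  -- |Cross| = |X| * |Y|
  have hinjprod : Set.InjOn (fun p : V × V => s(p.1, p.2)) (X ×ˢ Y) := by
    rintro ⟨a, b⟩ ⟨ha, hb⟩ ⟨a', b'⟩ ⟨ha', hb'⟩ h
    simp only [Sym2.eq, Sym2.rel_iff', Prod.mk.injEq, Prod.swap_prod_mk] at h
    rcases h with ⟨rfl, rfl⟩ | ⟨rfl, rfl⟩
    · rfl
    · exact absurd ha (fun h => hnotboth _ h hb')
  have hCrosscard : Cross.ncard = X.ncard * Y.ncard := by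
    rw [hCross, Set.ncard_image_of_injOn hinjprod]
    rw [Set.ncard_eq_toFinset_card', Set.ncard_eq_toFinset_card',
      Set.ncard_eq_toFinset_card']
    rw [← Finset.card_product]
    congr 1
    ext ⟨a, b⟩
    simp
  -- n = |X| + |Y|
  have hncard : Fintype.card V = X.ncard + Y.ncard := by
    rw [← Set.ncard_union_eq hdisj (hfinV _) (hfinV _), hcover, Set.ncard_univ,
      Nat.card_eq_fintype_card]
  -- main natural-number identity
  have hkey : X.ncard * Y.ncard = G.edgeSet.ncard + (freeSet G u v f).ncard := by
    rw [← hCrosscard, hC, hCN2, hInj, hm]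
    ring
  have h1 : (G.edgeSet.ncard : ℤ) =
      (X.ncard : ℤ) * (Y.ncard : ℤ) - (freeSet G u v f).ncard := by
    have := congrArg (fun n : ℕ => (n : ℤ)) hkey
    push_cast at this
    linarith
  refine ⟨h1, ?_, ?_⟩
  · have h4 : ((Fintype.card V : ℤ) ^ 2 - ((X.ncard : ℤ) - (Y.ncard : ℤ)) ^ 2) =
        4 * ((X.ncard : ℤ) * (Y.ncard : ℤ)) := by
      have : (Fintype.card V : ℤ) = (X.ncard : ℤ) + (Y.ncard : ℤ) := by
        rw [hncard]; push_cast; ring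
      rw [this]; ring
    rw [h4, Int.mul_ediv_cancel_left _ (by norm_num)]
    exact h1
  · have hle : X.ncard * Y.ncard ≤ Fintype.card V ^ 2 / 4 := by
      rw [Nat.le_div_iff_mul_le (by norm_num)]
      rw [hncard]
      zify
      nlinarith [sq_nonneg ((X.ncard : ℤ) - (Y.ncard : ℤ))]
    have hle' : ((X.ncard * Y.ncard : ℕ) : ℤ) ≤ ((Fintype.card V ^ 2 / 4 : ℕ) : ℤ) :=
      Int.ofNat_le.mpr hle
    rw [Nat.cast_mul] at hle'
    linarith [h1, hle']
end

section
/- Let G be a diameter-2-critical graph with a dominating edge uv such that P_uv ∩ N(v) = ∅ and P_uv ≠ ∅, and let f be an edge-assignment for (G,uv). Then |S_u| ≥ |S_v| − free(f). -/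
variable {V : Type*}

private lemma exists_common_of_walk {V : Type*} {G : SimpleGraph V} {x y : V}
    (w : G.Walk x y) (hl : w.length ≤ 2) (hxy : x ≠ y) (hadj : ¬ G.Adj x y) :
    ∃ z, G.Adj x z ∧ G.Adj z y := by
  cases w with
  | nil => exact absurd rfl hxy
  | cons h w' =>
    cases w' with
    | nil => exact absurd h hadj
    | cons h' w'' =>
      simp only [SimpleGraph.Walk.length_cons] at hl
      obtain rfl := SimpleGraph.Walk.eq_of_length_eq_zero (by omega : w''.length = 0)
      exact ⟨_, h, h'⟩

/-- if `P_uv ∩ N(v) = ∅` and `P_uv ≠ ∅`, then `|S_u| ≥ |S_v| − free(f)`. -/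
theorem statement11 {V : Type*} [Fintype V] (G : SimpleGraph V) (u v : V)
    (hG : IsD2C G) (hdom : IsDominatingEdge G u v)
    (hP : Puv G u v ∩ G.neighborSet v = ∅) (hPne : (Puv G u v).Nonempty)
    (f : Sym2 V → Sym2 V) (hf : IsEdgeAssignment G u v f) :
    ((Sside G u v v u).ncard : ℤ) - ((freeSet G u v f).ncard : ℤ) ≤
      ((Sside G u v u v).ncard : ℤ) := by
  classical
  obtain ⟨p, hpP⟩ := hPne
  obtain ⟨hpu, hpv, hcritp⟩ := hpP
  have huv : u ≠ v := hdom.1.ne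
  have hvp : ¬ G.Adj v p := fun h =>
    Set.eq_empty_iff_forall_notMem.mp hP p ⟨⟨hpu, hpv, hcritp⟩, h⟩
  have hup : G.Adj u p := by
    rcases hdom.2 p with h | h | h | h
    · exact absurd h hpu
    · exact absurd h hpv
    · exact h
    · exact absurd h hvp
  -- uv is critical for {p, v}
  have hcrit : CriticalFor G s(u, v) p v := by
    rcases hcritp with h | h
    · exact h
    · exfalso
      have h3 := h.2.2 (SimpleGraph.Walk.cons hup.symm SimpleGraph.Walk.nil) (by simp)
      simp only [SimpleGraph.Walk.edges_cons, SimpleGraph.Walk.edges_nil,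
        List.mem_singleton, Sym2.eq_iff] at h3
      rcases h3 with ⟨h1, _⟩ | ⟨_, h2⟩
      · exact hpu h1.symm
      · exact hpv h2.symm
  -- key structural fact: the only common neighbour of p and N(v) is u
  have key : ∀ w, G.Adj p w → G.Adj w v → w = u := by
    intro w h1 h2
    have h3 := hcrit.2.2 (SimpleGraph.Walk.cons h1 (SimpleGraph.Walk.cons h2
      SimpleGraph.Walk.nil)) (by simp)
    simp only [SimpleGraph.Walk.edges_cons, SimpleGraph.Walk.edges_nil,
      List.mem_cons, List.mem_singleton, List.not_mem_nil, or_false, Sym2.eq_iff] at h3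
    rcases h3 with (⟨h4, _⟩ | ⟨_, h5⟩) | (⟨h4, _⟩ | ⟨h4, _⟩)
    · exact absurd h4.symm hpu
    · exact absurd h5.symm hpv
    · exact h4.symm
    · exact absurd h4 huv
  -- X and Y are disjoint
  have hXY : ∀ a, a ∈ Xset G u v → a ∈ Yset G u v → False := by
    intro a hX hY
    rcases hY with hY | hY
    · -- a = u
      rcases hY with rfl
      rcases hX with ((hX | hX) | hX) | hX
      · exact huv hX
      · exact G.irrefl hX.1
      · exact hX.1 rfl
      · exact G.irrefl hX.1
    · obtain ⟨hav, hnot⟩ := hY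
      rcases hX with ((hX | hX) | hX) | hX
      · exact G.irrefl (hX ▸ hav)
      · exact hnot (Or.inl (Or.inr ⟨hX.1, hav⟩))
      · exact hnot (Or.inl (Or.inl hX))
      · exact hnot (Or.inl (Or.inr hX))
  have hpX : p ∈ Xset G u v := Or.inl (Or.inr ⟨hpu, hpv, hcritp⟩)
  -- facts about an arbitrary y ∈ S_v
  have yfacts : ∀ y ∈ Sside G u v v u, G.Adj v y ∧ ¬ G.Adj u y ∧ y ≠ u ∧ p ≠ y ∧
      ¬ G.Adj p y := by
    intro y hy
    obtain ⟨hvy, hnot⟩ := hy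
    have hvy : G.Adj v y := hvy
    have hnuy : ¬ G.Adj u y := fun h => hnot (Or.inl (Or.inr ⟨h, hvy⟩))
    have hyu : y ≠ u := fun h => hnot (Or.inr h)
    have hpy : p ≠ y := fun h => hvp (by rw [h]; exact hvy)
    refine ⟨hvy, hnuy, hyu, hpy, fun h => ?_⟩
    exact hyu (key y h hvy.symm)
  -- common neighbours of p and y lie in S_u
  have commSu : ∀ y ∈ Sside G u v v u, ∀ z, G.Adj p z → G.Adj z y →
      z ∈ Sside G u v u v := by
    intro y hy z h1 h2
    obtain ⟨hvy, hnuy, hyu, hpy, hnpy⟩ := yfacts y hy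
    have hzu : z ≠ u := fun h => hnuy (h ▸ h2)
    have hnzv : ¬ G.Adj z v := fun h => hzu (key z h1 h)
    have hzv : z ≠ v := fun h => hvp (h ▸ h1).symm
    have huz : G.Adj u z := by
      rcases hdom.2 z with h | h | h | h
      · exact absurd h hzu
      · exact absurd h hzv
      · exact h
      · exact absurd h.symm hnzv
    refine ⟨huz, ?_⟩
    rintro ((hzP | hzS) | h)
    · -- z ∈ Puv : contradiction
      obtain ⟨_, _, hc⟩ := hzP
      rcases hc with hc | hc
      · have h3 := hc.2.2 (SimpleGraph.Walk.cons h2 (SimpleGraph.Walk.cons hvy.symm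
          SimpleGraph.Walk.nil)) (by simp)
        simp only [SimpleGraph.Walk.edges_cons, SimpleGraph.Walk.edges_nil,
          List.mem_cons, List.mem_singleton, List.not_mem_nil, or_false, Sym2.eq_iff] at h3
        rcases h3 with (⟨h4, _⟩ | ⟨_, h5⟩) | (⟨h4, _⟩ | ⟨h4, _⟩)
        · exact hzu h4.symm
        · exact hzv h5.symm
        · exact hyu h4.symm
        · exact huv h4
      · have h3 := hc.2.2 (SimpleGraph.Walk.cons huz.symm SimpleGraph.Walk.nil) (by simp)
        simp only [SimpleGraph.Walk.edges_cons, SimpleGraph.Walk.edges_nil,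
          List.mem_singleton, Sym2.eq_iff] at h3
        rcases h3 with ⟨h4, _⟩ | ⟨_, h5⟩
        · exact hzu h4.symm
        · exact hzv h5.symm
    · exact hnzv hzS.2.symm
    · exact hzv h
  -- common neighbour of p and y exists
  have cnex : ∀ y ∈ Sside G u v v u, ∃ z, G.Adj p z ∧ G.Adj z y := by
    intro y hy
    obtain ⟨_, _, _, hpy, hnpy⟩ := yfacts y hy
    obtain ⟨w, hw⟩ := hG.1 p y
    exact exists_common_of_walk w hw hpy hnpy
  -- core lemma: if f e = s(p,y) then e = s(p,z) for some z ∈ S_u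
  have hcore : ∀ y ∈ Sside G u v v u, ∀ e, InnerEdge G u v e → f e = s(p, y) →
      ∃ z, z ∈ Sside G u v u v ∧ f s(p, z) = s(p, y) := by
    intro y hy e he hfe
    obtain ⟨hvy, hnuy, hyu, hpy, hnpy⟩ := yfacts y hy
    have hyY : y ∈ Yset G u v := Or.inr hy
    obtain ⟨b, c, hbe, hnbc, hfbc, hcritbc, hXc, hYc⟩ := hf.2 e he
    have heq : s(b, c) = s(p, y) := hfbc ▸ hfe
    rw [Sym2.eq_iff] at heq
    obtain ⟨z0, hz01, hz02⟩ := cnex y hy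
    have hz0Su := commSu y hy z0 hz01 hz02
    have hz0X : z0 ∈ Xset G u v := Or.inl (Or.inl (Or.inr hz0Su))
    rcases heq with ⟨rfl, rfl⟩ | ⟨rfl, rfl⟩
    · -- b = p, c = y
      have heX : ∀ a ∈ e, a ∈ Xset G u v := by
        rcases he.2 with h | h
        · exact h
        · exact absurd (hYc h).1 (fun hm => hXY b hpX hm)
      obtain ⟨z, rfl⟩ := Sym2.mem_iff_exists.mp hbe
      have hpz : G.Adj b z := (SimpleGraph.mem_edgeSet G).mp he.1
      have h3 := hcritbc.2.2 (SimpleGraph.Walk.cons hz01 (SimpleGraph.Walk.cons hz02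
        SimpleGraph.Walk.nil)) (by simp)
      simp only [SimpleGraph.Walk.edges_cons, SimpleGraph.Walk.edges_nil,
        List.mem_cons, List.mem_singleton, List.not_mem_nil, or_false, Sym2.eq_iff] at h3
      have hz : z = z0 := by
        rcases h3 with (⟨_, h4⟩ | ⟨h4, _⟩) | (⟨h4, _⟩ | ⟨h4, h5⟩)
        · exact h4
        · exact absurd h4 hz01.ne
        · exact absurd h4 hz01.ne
        · exact absurd h4 hpy
      subst hz
      exact ⟨z, hz0Su, hfe⟩
    · -- b = y, c = p : impossible
      exfalso
      have heY : ∀ a ∈ e, a ∈ Yset G u v := by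
        rcases he.2 with h | h
        · exact absurd (hXc h).1 (fun hm => hXY b hm hyY)
        · exact h
      have h3 := hcritbc.2.2 (SimpleGraph.Walk.cons hz02.symm (SimpleGraph.Walk.cons
        hz01.symm SimpleGraph.Walk.nil)) (by simp)
      simp only [SimpleGraph.Walk.edges_cons, SimpleGraph.Walk.edges_nil,
        List.mem_cons, List.mem_singleton, List.not_mem_nil, or_false] at h3
      rcases h3 with h4 | h4
      · have : z0 ∈ e := h4 ▸ Sym2.mem_mk_right b z0
        exact hXY z0 hz0X (heY z0 this)
      · have : c ∈ e := h4 ▸ Sym2.mem_mk_right z0 c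
        exact hXY c hpX (heY c this)
  -- build the injection
  set Hy : V → Prop := fun y => ∃ z, z ∈ Sside G u v u v ∧ f s(p, z) = s(p, y) with hHy
  set F : V → V ⊕ Sym2 V := fun y => if h : Hy y then Sum.inl h.choose else Sum.inr s(p, y)
    with hF
  have hpy_inj : ∀ y ∈ Sside G u v v u, ∀ y' ∈ Sside G u v v u,
      s(p, y) = s(p, y') → y = y' := by
    intro y hy y' hy' h
    rw [Sym2.eq_iff] at h
    rcases h with ⟨_, h⟩ | ⟨h1, _⟩
    · exact h
    · exact absurd h1 (yfacts y' hy').2.2.2.1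
  have himg : ∀ y ∈ Sside G u v v u,
      F y ∈ Sum.inl '' Sside G u v u v ∪ Sum.inr '' freeSet G u v f := by
    intro y hy
    obtain ⟨hvy, hnuy, hyu, hpy, hnpy⟩ := yfacts y hy
    by_cases h : Hy y
    · simp only [hF, dif_pos h]
      exact Or.inl ⟨h.choose, h.choose_spec.1, rfl⟩
    · simp only [hF, dif_neg h]
      refine Or.inr ⟨s(p, y), ⟨⟨p, y, hpX, Or.inr hy, hnpy, rfl⟩, ?_⟩, rfl⟩
      intro e he hfe
      exact h (hcore y hy e he hfe)
  have hinj : Set.InjOn F (Sside G u v v u) := by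
    intro y hy y' hy' hFy
    simp only [hF] at hFy
    by_cases h : Hy y <;> by_cases h' : Hy y'
    · rw [dif_pos h, dif_pos h'] at hFy
      have h1 := h.choose_spec
      have h2 := h'.choose_spec
      rw [Sum.inl.injEq] at hFy
      rw [hFy] at h1
      exact hpy_inj y hy y' hy' (h1.2.symm.trans h2.2)
    · rw [dif_pos h, dif_neg h'] at hFy
      exact absurd hFy (by simp)
    · rw [dif_neg h, dif_pos h'] at hFy
      exact absurd hFy (by simp)
    · rw [dif_neg h, dif_neg h'] at hFy
      rw [Sum.inr.injEq] at hFy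
      exact hpy_inj y hy y' hy' hFy
  -- counting
  have hsub : F '' Sside G u v v u ⊆
      Sum.inl '' Sside G u v u v ∪ Sum.inr '' freeSet G u v f := by
    rintro _ ⟨y, hy, rfl⟩
    exact himg y hy
  have hcount : (Sside G u v v u).ncard ≤
      (Sside G u v u v).ncard + (freeSet G u v f).ncard := by
    calc (Sside G u v v u).ncard = (F '' Sside G u v v u).ncard :=
          (Set.ncard_image_of_injOn hinj).symm
      _ ≤ (Sum.inl '' Sside G u v u v ∪ Sum.inr '' freeSet G u v f).ncard :=
          Set.ncard_le_ncard hsub (Set.toFinite _)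
      _ ≤ (Sum.inl '' Sside G u v u v : Set (V ⊕ Sym2 V)).ncard
          + (Sum.inr '' freeSet G u v f : Set (V ⊕ Sym2 V)).ncard :=
          Set.ncard_union_le _ _
      _ = (Sside G u v u v).ncard + (freeSet G u v f).ncard := by
          rw [Set.ncard_image_of_injective _ Sum.inl_injective,
            Set.ncard_image_of_injective _ Sum.inr_injective]
  omega
end

section
/- Let G be a diameter-2-critical graph with a dominating edge uv such that P_uv = ∅, let f be an edge-assignment for (G,uv), and let {w,w'} = {u,v}. Let x, y, z ∈ S_w be three pairwise adjacent vertices such that in the f-orientation the edges xy, xz and yz are oriented from x to y, from x to z, and from y to z, respectively. Then there is an f-free pair containing x. -/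
variable {V : Type*}

lemma critical_walk_two {G : SimpleGraph V} {e : Sym2 V} {a b m : V}
    (h1 : G.Adj a m) (h2 : G.Adj m b)
    (hcrit : ∀ w : G.Walk a b, w.length ≤ 2 → e ∈ w.edges) :
    e = s(a, m) ∨ e = s(m, b) := by
  have h := hcrit (SimpleGraph.Walk.cons h1 (SimpleGraph.Walk.cons h2 SimpleGraph.Walk.nil))
    (by simp)
  simpa using h

lemma adj_of_crit {G : SimpleGraph V} {y z c : V} (hyz : G.Adj y z)
    (hzc : z ≠ c) (hnadj : ¬ G.Adj z c)
    (hex : ∃ w : G.Walk z c, w.length ≤ 2)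
    (hall : ∀ w : G.Walk z c, w.length ≤ 2 → s(y, z) ∈ w.edges) :
    G.Adj y c := by
  obtain ⟨W, hW⟩ := hex
  cases W with
  | nil => exact absurd rfl hzc
  | cons h W' =>
    cases W' with
    | nil => exact absurd h hnadj
    | cons h2 W'' =>
      cases W'' with
      | nil =>
        have hmem := hall _ hW
        simp [Sym2.eq_iff] at hmem
        rcases hmem with (⟨h4, _⟩ | rfl) | (⟨rfl, _⟩ | ⟨rfl, rfl⟩)
        · exact absurd h4 hyz.ne
        · exact h2
        · exact h2
        · exact absurd h (G.irrefl)
      | cons h3 W''' =>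
        simp [SimpleGraph.Walk.length_cons] at hW

lemma core {G : SimpleGraph V} {u v : V} {f : Sym2 V → Sym2 V}
    (hf : IsEdgeAssignment G u v f)
    {x y z c3 : V}
    (hadj₁ : G.Adj x y) (hadj₂ : G.Adj x z) (hadj₃ : G.Adj y z)
    (hxnf : x ∉ f s(x, y))
    (hnadj : ¬ G.Adj z c3) (hzc3 : z ≠ c3)
    (hex : ∃ w : G.Walk z c3, w.length ≤ 2)
    (hall : ∀ w : G.Walk z c3, w.length ≤ 2 → s(y, z) ∈ w.edges)
    (hside : (x ∈ Xset G u v ∧ c3 ∈ Yset G u v ∧ y ∉ Yset G u v ∧ c3 ∉ Xset G u v) ∨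
             (x ∈ Yset G u v ∧ c3 ∈ Xset G u v ∧ y ∉ Xset G u v ∧ c3 ∉ Yset G u v)) :
    ∃ p ∈ freeSet G u v f, x ∈ p := by
  have hyc3 : G.Adj y c3 := adj_of_crit hadj₃ hzc3 hnadj hex hall
  have hxnec3 : x ≠ c3 := fun h => hnadj (h ▸ hadj₂.symm)
  have hync3 : y ≠ c3 := hyc3.ne
  have hxc3 : ¬ G.Adj x c3 := by
    intro h
    rcases critical_walk_two hadj₂.symm h hall with h' | h' <;>
      rw [Sym2.eq_iff] at h'
    · rcases h' with ⟨h1, _⟩ | ⟨h1, _⟩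
      · exact hadj₃.ne h1
      · exact hadj₁.ne h1.symm
    · rcases h' with ⟨h1, _⟩ | ⟨_, h1⟩
      · exact hadj₁.ne h1.symm
      · exact hadj₂.ne h1.symm
  have hfree : ∀ e, InnerEdge G u v e → f e ≠ s(x, c3) := by
    intro e he hfe
    obtain ⟨b, c, hbmem, hnbc, hfe', hcrit, hsX, hsY⟩ := hf.2 e he
    rw [hfe] at hfe'
    rw [Sym2.eq_iff] at hfe'
    rcases hfe' with ⟨hb, hc⟩ | ⟨hb, hc⟩
    · subst hb; subst hc
      rcases critical_walk_two hadj₁ hyc3 hcrit.2.2 with rfl | rfl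
      · exact hxnf (hfe ▸ Sym2.mem_mk_left x c3)
      · rw [Sym2.mem_iff] at hbmem
        rcases hbmem with h | h
        · exact hadj₁.ne h
        · exact hxnec3 h
    · subst hb; subst hc
      rcases critical_walk_two hyc3.symm hadj₁.symm hcrit.2.2 with rfl | rfl
      · rcases he.2 with hX | hY
        · rcases hside with ⟨_, _, _, hc3X⟩ | ⟨_, _, hyX, _⟩
          · exact hc3X (hX c3 (Sym2.mem_mk_left c3 y))
          · exact hyX (hX y (Sym2.mem_mk_right c3 y))
        · rcases hside with ⟨_, _, hyY, _⟩ | ⟨_, _, _, hc3Y⟩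
          · exact hyY (hY y (Sym2.mem_mk_right c3 y))
          · exact hc3Y (hY c3 (Sym2.mem_mk_left c3 y))
      · rw [Sym2.mem_iff] at hbmem
        rcases hbmem with h | h
        · exact hync3 h.symm
        · exact hxnec3 h.symm
  rcases hside with ⟨hxX, hc3Y, _, _⟩ | ⟨hxY, hc3X, _, _⟩
  · exact ⟨s(x, c3), ⟨⟨x, c3, hxX, hc3Y, hxc3, rfl⟩, hfree⟩, Sym2.mem_mk_left x c3⟩
  · exact ⟨s(x, c3), ⟨⟨c3, x, hc3X, hxY, fun h => hxc3 h.symm, Sym2.eq_swap.symm⟩, hfree⟩,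
      Sym2.mem_mk_left x c3⟩

lemma su_props {G : SimpleGraph V} {u v a : V} (h : a ∈ Sside G u v u v) :
    G.Adj u a ∧ ¬ G.Adj v a ∧ a ∈ Xset G u v ∧ a ∉ Yset G u v := by
  obtain ⟨h1, h2⟩ := h
  simp only [Set.mem_union, Set.mem_singleton_iff, not_or] at h2
  have hua : G.Adj u a := h1
  have hnv : ¬ G.Adj v a := fun hv => h2.1.2 ⟨hua, hv⟩
  refine ⟨hua, hnv, Set.mem_union_left _ (Set.mem_union_left _ (Set.mem_union_right _
    ⟨h1, by simp only [Set.mem_union, Set.mem_singleton_iff, not_or]; exact h2⟩)), ?_⟩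
  intro hY
  simp only [Yset, Set.mem_union, Set.mem_singleton_iff] at hY
  rcases hY with h | h
  · exact hua.ne h.symm
  · exact hnv h.1

lemma sv_props {G : SimpleGraph V} {u v a : V} (h : a ∈ Sside G u v v u) :
    G.Adj v a ∧ ¬ G.Adj u a ∧ a ∈ Yset G u v ∧ a ∉ Xset G u v := by
  obtain ⟨h1, h2⟩ := h
  simp only [Set.mem_union, Set.mem_singleton_iff, not_or] at h2
  have hva : G.Adj v a := h1
  have hnu : ¬ G.Adj u a := fun hu => h2.1.2 ⟨hu, hva⟩
  refine ⟨hva, hnu, Set.mem_union_right _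
    ⟨h1, by simp only [Set.mem_union, Set.mem_singleton_iff, not_or]; exact h2⟩, ?_⟩
  intro hX
  simp only [Xset, Set.mem_union, Set.mem_singleton_iff] at hX
  rcases hX with ((hX | hX) | hX) | hX
  · exact hva.ne hX.symm
  · exact hnu hX.1
  · exact h2.1.1 hX
  · exact h2.1.2 hX

lemma notY_of_X {G : SimpleGraph V} {u v c : V} (hP : Puv G u v = ∅)
    (hc : c ∈ Xset G u v) (hcv : c ≠ v) : c ∉ Yset G u v := by
  simp only [Xset, Set.mem_union, Set.mem_singleton_iff] at hc
  rcases hc with ((hc | hc) | hc) | hc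
  · exact absurd hc hcv
  · exact (su_props hc).2.2.2
  · exact absurd hc (hP ▸ Set.notMem_empty c)
  · intro hY
    simp only [Yset, Set.mem_union, Set.mem_singleton_iff] at hY
    rcases hY with h | h
    · exact hc.1.ne h.symm
    · obtain ⟨_, h2⟩ := h
      simp only [Set.mem_union, Set.mem_singleton_iff, not_or] at h2
      exact h2.1.2 hc

/-- a transitive triangle of the `f`-orientation inside `S_w` yields an
`f`-free pair containing its source `x`. -/
theorem statement14 {V : Type*} (G : SimpleGraph V) (u v : V)
    (hG : IsD2C G) (hdom : IsDominatingEdge G u v) (hP : Puv G u v = ∅)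
    (f : Sym2 V → Sym2 V) (hf : IsEdgeAssignment G u v f)
    (w w' : V) (hw : (w = u ∧ w' = v) ∨ (w = v ∧ w' = u))
    (x y z : V) (hx : x ∈ Sside G u v w w') (hy : y ∈ Sside G u v w w')
    (hz : z ∈ Sside G u v w w')
    (hadj₁ : G.Adj x y) (hadj₂ : G.Adj x z) (hadj₃ : G.Adj y z)
    (hxy : FOrient G u v f x y) (hxz : FOrient G u v f x z)
    (hyz : FOrient G u v f y z) :
    ∃ p ∈ freeSet G u v f, x ∈ p := by
  have hxnf : x ∉ f s(x, y) := hxy.2.2.2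
  have hzf : z ∈ f s(y, z) := hyz.2.2.1
  have hynf : y ∉ f s(y, z) := hyz.2.2.2
  rcases hw with ⟨hw1, hw2⟩ | ⟨hw1, hw2⟩ <;> rw [hw1, hw2] at hx hy hz
  · -- w = u
    obtain ⟨hux, hnvx, hxX, hxnY⟩ := su_props hx
    obtain ⟨huy, hnvy, hyX, hynY⟩ := su_props hy
    obtain ⟨huz, hnvz, hzX, hznY⟩ := su_props hz
    have hXall : ∀ a ∈ s(y, z), a ∈ Xset G u v := by
      intro a ha
      rcases Sym2.mem_iff.1 ha with rfl | rfl
      exacts [hyX, hzX]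
    have hinner : InnerEdge G u v s(y, z) := ⟨G.mem_edgeSet.2 hadj₃, Or.inl hXall⟩
    obtain ⟨b, c, hbmem, hnbc, hfe, hcrit, hsX, hsY⟩ := hf.2 _ hinner
    have hzbc : z ∈ s(b, c) := hfe ▸ hzf
    have hybc : y ∉ s(b, c) := hfe ▸ hynf
    have hbz : b = z := by
      cases Sym2.mem_iff.1 hbmem with
      | inl h => exact absurd (h ▸ Sym2.mem_mk_left b c : y ∈ s(b, c)) hybc
      | inr h => exact h
    subst hbz
    obtain ⟨hbX, hcY⟩ := hsX hXall
    have hcu : c ≠ u := fun h => hnbc (h ▸ huz.symm)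
    have hcSv : c ∈ Sside G u v v u := by
      have h := hcY
      simp only [Yset, Set.mem_union, Set.mem_singleton_iff] at h
      rcases h with h | h
      · exact absurd h hcu
      · exact h
    obtain ⟨hvc, hnuc, _, hcnX⟩ := sv_props hcSv
    exact core hf hadj₁ hadj₂ hadj₃ hxnf hnbc hcrit.1 hcrit.2.1 hcrit.2.2
      (Or.inl ⟨hxX, hcY, hynY, hcnX⟩)
  · -- w = v
    obtain ⟨hvx, hnux, hxY, hxnX⟩ := sv_props hx
    obtain ⟨hvy, hnuy, hyY, hynX⟩ := sv_props hy
    obtain ⟨hvz, hnuz, hzY, hznX⟩ := sv_props hz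
    have hYall : ∀ a ∈ s(y, z), a ∈ Yset G u v := by
      intro a ha
      rcases Sym2.mem_iff.1 ha with rfl | rfl
      exacts [hyY, hzY]
    have hinner : InnerEdge G u v s(y, z) := ⟨G.mem_edgeSet.2 hadj₃, Or.inr hYall⟩
    obtain ⟨b, c, hbmem, hnbc, hfe, hcrit, hsX, hsY⟩ := hf.2 _ hinner
    have hzbc : z ∈ s(b, c) := hfe ▸ hzf
    have hybc : y ∉ s(b, c) := hfe ▸ hynf
    have hbz : b = z := by
      cases Sym2.mem_iff.1 hbmem with
      | inl h => exact absurd (h ▸ Sym2.mem_mk_left b c : y ∈ s(b, c)) hybc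
      | inr h => exact h
    subst hbz
    obtain ⟨hbY, hcX⟩ := hsY hYall
    have hcv : c ≠ v := fun h => hnbc (h ▸ hvz.symm)
    have hcnY : c ∉ Yset G u v := notY_of_X hP hcX hcv
    exact core hf hadj₁ hadj₂ hadj₃ hxnf hnbc hcrit.1 hcrit.2.1 hcrit.2.2
      (Or.inr ⟨hxY, hcX, hynX, hcnY⟩)
end

section
/- Let G be a diameter-2-critical graph with a dominating edge uv such that P_uv = ∅, and let f be an edge-assignment for (G,uv). Let x be a sink of the f-orientation, i.e., a vertex of S_u or S_v whose in-neighbourhood N⁻(x) in the f-orientation is nonempty and whose out-neighbourhood is empty. Then there is at least one f-free pair containing a vertex of the closed in-neighbourhood N⁻[x] = N⁻(x) ∪ {x}. -/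
variable {V : Type*}

open SimpleGraph

section S15Aux

variable {V : Type*} {G : SimpleGraph V}

private lemma s15_walk_shape {b c : V} (w : G.Walk b c) (hw : w.length ≤ 2) :
    (b = c) ∨ (G.Adj b c ∧ w.edges = [s(b, c)]) ∨
      (∃ m, G.Adj b m ∧ G.Adj m c ∧ w.edges = [s(b, m), s(m, c)]) := by
  match w with
  | SimpleGraph.Walk.nil => exact Or.inl rfl
  | SimpleGraph.Walk.cons h SimpleGraph.Walk.nil => exact Or.inr (Or.inl ⟨h, by simp⟩)
  | SimpleGraph.Walk.cons h (SimpleGraph.Walk.cons h' SimpleGraph.Walk.nil) =>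
      exact Or.inr (Or.inr ⟨_, h, h', by simp⟩)
  | SimpleGraph.Walk.cons h (SimpleGraph.Walk.cons h' (SimpleGraph.Walk.cons h'' p)) =>
      simp [SimpleGraph.Walk.length_cons] at hw

private lemma s15_crit_symm {e : Sym2 V} {a b : V} (h : CriticalFor G e a b) :
    CriticalFor G e b a := by
  obtain ⟨hne, ⟨w, hw⟩, hall⟩ := h
  refine ⟨hne.symm, ⟨w.reverse, by simp [hw]⟩, fun w' hw' => ?_⟩
  have := hall w'.reverse (by simp [hw'])
  simpa using this

private lemma s15_crit_one {e : Sym2 V} {b c : V} (h : CriticalFor G e b c)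
    (h1 : G.Adj b c) : e = s(b, c) := by
  have := h.2.2 (SimpleGraph.Walk.cons h1 SimpleGraph.Walk.nil) (by simp)
  simpa using this

private lemma s15_crit_two {e : Sym2 V} {b c m : V} (h : CriticalFor G e b c)
    (h1 : G.Adj b m) (h2 : G.Adj m c) : e = s(b, m) ∨ e = s(m, c) := by
  have := h.2.2 (SimpleGraph.Walk.cons h1 (SimpleGraph.Walk.cons h2 SimpleGraph.Walk.nil))
    (by simp)
  simpa using this

private lemma s15_crit_shape {e : Sym2 V} {b c : V} (h : CriticalFor G e b c) :
    (G.Adj b c ∧ e = s(b, c)) ∨ ∃ m, G.Adj b m ∧ G.Adj m c ∧ (e = s(b, m) ∨ e = s(m, c)) := by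
  obtain ⟨hne, ⟨w, hw⟩, hall⟩ := h
  have hmem := hall w hw
  rcases s15_walk_shape w hw with rfl | ⟨hadj, hE⟩ | ⟨m, h1, h2, hE⟩
  · exact absurd rfl hne
  · rw [hE] at hmem; simp at hmem; exact Or.inl ⟨hadj, hmem⟩
  · rw [hE] at hmem; simp at hmem; exact Or.inr ⟨m, h1, h2, hmem⟩

private lemma s15_crit_exists (hG : IsD2C G) {e : Sym2 V} (he : e ∈ G.edgeSet) :
    ∃ b c, CriticalFor G e b c := by
  obtain ⟨hdiam, -, hdel⟩ := hG
  have h2 := hdel e he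
  rw [DiamAtMostTwo] at h2
  push_neg at h2
  obtain ⟨b, c, hbc⟩ := h2
  refine ⟨b, c, ?_, hdiam b c, ?_⟩
  · rintro rfl
    have := hbc SimpleGraph.Walk.nil
    simp at this
  · intro w hw
    by_contra hmem
    have hsub : ∀ e' ∈ w.edges, e' ∈ (G.deleteEdges {e}).edgeSet := by
      intro e' he'
      rw [SimpleGraph.edgeSet_deleteEdges]
      refine ⟨w.edges_subset_edgeSet he', ?_⟩
      simp only [Set.mem_singleton_iff]
      rintro rfl
      exact hmem he'
    have := hbc (w.transfer _ hsub)
    rw [SimpleGraph.Walk.length_transfer] at this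
    omega

end S15Aux
section S15Aux2

variable {V : Type*} {G : SimpleGraph V} {u v : V}

private lemma s15_not_mem_empty {s : Set V} (hs : s = ∅) {w : V} (h : w ∈ s) : False := by
  rw [hs] at h; exact h

private lemma s15_Suv_empty (hG : IsD2C G) (hdom : IsDominatingEdge G u v)
    (hP : Puv G u v = ∅) : Suv G u v = ∅ := by
  have huv := hdom.1
  obtain ⟨b, c, hc⟩ := s15_crit_exists hG (G.mem_edgeSet.2 huv)
  have reduce : ∀ p q : V, CriticalFor G s(u, v) p q → (p = u ∨ p = v ∨ q = u ∨ q = v) := by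
    intro p q hpq
    rcases s15_crit_shape hpq with ⟨hadj, hE⟩ | ⟨m, h1, h2, hE | hE⟩ <;>
      rw [Sym2.eq_iff] at hE <;> tauto
  have norm : ∀ p q : V, CriticalFor G s(u, v) p q → CriticalFor G s(u, v) u v := by
    intro p q hpq
    rcases reduce p q hpq with h | h | h | h
    · rw [h] at hpq
      by_cases hq : q = v
      · rw [hq] at hpq; exact hpq
      · exact absurd (show q ∈ Puv G u v from ⟨hpq.1.symm, hq, Or.inr (s15_crit_symm hpq)⟩)
          (fun hh => s15_not_mem_empty hP hh)
    · rw [h] at hpq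
      by_cases hq : q = u
      · rw [hq] at hpq; exact s15_crit_symm hpq
      · exact absurd (show q ∈ Puv G u v from ⟨hq, hpq.1.symm, Or.inl (s15_crit_symm hpq)⟩)
          (fun hh => s15_not_mem_empty hP hh)
    · rw [h] at hpq
      by_cases hp : p = v
      · rw [hp] at hpq; exact s15_crit_symm hpq
      · exact absurd (show p ∈ Puv G u v from ⟨hpq.1, hp, Or.inr hpq⟩)
          (fun hh => s15_not_mem_empty hP hh)
    · rw [h] at hpq
      by_cases hp : p = u
      · rw [hp] at hpq; exact hpq
      · exact absurd (show p ∈ Puv G u v from ⟨hp, hpq.1, Or.inl hpq⟩)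
          (fun hh => s15_not_mem_empty hP hh)
  have key := norm b c hc
  ext w
  simp only [Suv, Set.mem_setOf_eq, Set.mem_empty_iff_false, iff_false]
  rintro ⟨h1, h2⟩
  rcases s15_crit_two key h1 h2.symm with hE | hE <;> rw [Sym2.eq_iff] at hE
  · rcases hE with ⟨-, hvw⟩ | ⟨-, hvu⟩
    · rw [hvw] at h2; exact G.irrefl h2
    · exact huv.ne hvu.symm
  · rcases hE with ⟨huw, -⟩ | ⟨huv', -⟩
    · rw [huw] at h1; exact G.irrefl h1
    · exact huv.ne huv'

end S15Aux2
section S15Aux3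

variable {V : Type*} {G : SimpleGraph V} {u v : V}

private lemma s15_mem_Su (hP : Puv G u v = ∅) (hS : Suv G u v = ∅) {w : V} :
    w ∈ Sside G u v u v ↔ G.Adj u w ∧ w ≠ v := by
  simp [Sside, hP, hS]

private lemma s15_mem_Sv (hP : Puv G u v = ∅) (hS : Suv G u v = ∅) {w : V} :
    w ∈ Sside G u v v u ↔ G.Adj v w ∧ w ≠ u := by
  simp [Sside, hP, hS]

private lemma s15_Su_adj {w : V} (h : w ∈ Sside G u v u v) : G.Adj u w := h.1

private lemma s15_Sv_adj {w : V} (h : w ∈ Sside G u v v u) : G.Adj v w := h.1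

private lemma s15_Su_sub_X {w : V} (h : w ∈ Sside G u v u v) : w ∈ Xset G u v := by
  rw [Xset]
  exact Or.inl (Or.inl (Or.inr h))

private lemma s15_Sv_sub_Y {w : V} (h : w ∈ Sside G u v v u) : w ∈ Yset G u v := by
  rw [Yset]
  exact Or.inr h

private lemma s15_SuSv (hS : Suv G u v = ∅) {w : V}
    (h1 : w ∈ Sside G u v u v) (h2 : w ∈ Sside G u v v u) : False :=
  s15_not_mem_empty hS (show w ∈ Suv G u v from ⟨s15_Su_adj h1, s15_Sv_adj h2⟩)

private lemma s15_Su_notY (hS : Suv G u v = ∅) {w : V} (h : w ∈ Sside G u v u v) :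
    w ∉ Yset G u v := by
  intro hy
  rw [Yset] at hy
  rcases hy with hy | hy
  · rw [Set.mem_singleton_iff] at hy
    rw [hy] at h
    exact G.irrefl (s15_Su_adj h)
  · exact s15_SuSv hS h hy

private lemma s15_Sv_notX (hP : Puv G u v = ∅) (hS : Suv G u v = ∅) {w : V}
    (h : w ∈ Sside G u v v u) : w ∉ Xset G u v := by
  intro hx
  rw [Xset] at hx
  rcases hx with ((hx | hx) | hx) | hx
  · rw [Set.mem_singleton_iff] at hx
    rw [hx] at h
    exact G.irrefl (s15_Sv_adj h)
  · exact s15_SuSv hS hx h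
  · exact s15_not_mem_empty hP hx
  · exact s15_not_mem_empty hS hx

private lemma s15_cross_not_inner (hP : Puv G u v = ∅) (hS : Suv G u v = ∅) {p q : V}
    (hp : p ∈ Sside G u v u v) (hq : q ∈ Sside G u v v u)
    (h : InnerEdge G u v s(p, q)) : False := by
  rcases h.2 with hall | hall
  · exact s15_Sv_notX hP hS hq (hall q (Sym2.mem_mk_right p q))
  · exact s15_Su_notY hS hp (hall p (Sym2.mem_mk_left p q))

private lemma s15_lemA (hP : Puv G u v = ∅) (hS : Suv G u v = ∅)
    {f : Sym2 V → Sym2 V} (hf : IsEdgeAssignment G u v f) {x w y : V}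
    (hxSu : x ∈ Sside G u v u v) (hwSu : w ∈ Sside G u v u v) (hxw : G.Adj x w)
    (hySv : y ∈ Sside G u v v u) (hxy : G.Adj x y) (hwy : ¬ G.Adj w y)
    (hout : ∀ b, ¬ FOrient G u v f x b) :
    FOrient G u v f w x ∧ s(w, y) ∈ freeSet G u v f := by
  have hxnY := s15_Su_notY hS hxSu
  have hwnY := s15_Su_notY hS hwSu
  have hallX : ∀ a ∈ s(x, w), a ∈ Xset G u v := by
    intro a ha
    rw [Sym2.mem_iff] at ha
    rcases ha with rfl | rfl
    · exact s15_Su_sub_X hxSu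
    · exact s15_Su_sub_X hwSu
  have hinner : InnerEdge G u v s(x, w) := ⟨G.mem_edgeSet.2 hxw, Or.inl hallX⟩
  obtain ⟨b, c, hbmem, hnadj, hfeq, hcrit, hXc, -⟩ := hf.2 _ hinner
  obtain ⟨hbX, hcY⟩ := hXc hallX
  rw [Sym2.mem_iff] at hbmem
  have hswap : s(w, x) = s(x, w) := Sym2.eq_swap
  have hbx : b = x := by
    rcases hbmem with rfl | rfl
    · rfl
    · exfalso
      apply hout b
      refine ⟨hxw, Or.inl ⟨hxSu, hwSu⟩, ?_, ?_⟩
      · rw [hfeq]; exact Sym2.mem_mk_left _ _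
      · rw [hfeq, Sym2.mem_iff]
        push_neg
        exact ⟨hxw.ne, fun h => hxnY (h ▸ hcY)⟩
  rw [hbx] at hfeq
  have hFor : FOrient G u v f w x := by
    refine ⟨hxw.symm, Or.inl ⟨hwSu, hxSu⟩, ?_, ?_⟩
    · rw [hswap, hfeq]; exact Sym2.mem_mk_left _ _
    · rw [hswap, hfeq, Sym2.mem_iff]
      push_neg
      exact ⟨hxw.ne.symm, fun h => hwnY (h ▸ hcY)⟩
  refine ⟨hFor, ⟨⟨w, y, s15_Su_sub_X hwSu, s15_Sv_sub_Y hySv, hwy, rfl⟩, ?_⟩⟩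
  intro e he hfe
  obtain ⟨b', c', hb'mem, -, hfeq', hcrit', -, -⟩ := hf.2 e he
  rw [hfe] at hfeq'
  rw [Sym2.eq_iff] at hfeq'
  have hcase : e = s(w, x) ∨ e = s(x, y) := by
    rcases hfeq' with ⟨hb', hc'⟩ | ⟨hb', hc'⟩
    · rw [← hb', ← hc'] at hcrit'
      exact s15_crit_two hcrit' hxw.symm hxy
    · rw [← hb', ← hc'] at hcrit'
      rcases s15_crit_two hcrit' hxy.symm hxw with h | h
      · rw [h, Sym2.eq_swap]
        right; rfl
      · left; rw [h]; exact Sym2.eq_swap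
  rcases hcase with rfl | rfl
  · rw [hswap] at hfe
    rw [hfeq] at hfe
    rw [Sym2.eq_iff] at hfe
    rcases hfe with ⟨hxww, -⟩ | ⟨hxy', -⟩
    · exact hxw.ne hxww
    · exact hxy.ne hxy'
  · exact s15_cross_not_inner hP hS hxSu hySv he

end S15Aux3
section S15Main

variable {V : Type*} {G : SimpleGraph V} {u v : V}

private lemma s15_mainSu (hG : IsD2C G) (hdom : IsDominatingEdge G u v)
    (hP : Puv G u v = ∅) {f : Sym2 V → Sym2 V} (hf : IsEdgeAssignment G u v f) {x : V}
    (hx : x ∈ Sside G u v u v)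
    (hin : ∃ a, FOrient G u v f a x) (hout : ∀ b, ¬ FOrient G u v f x b) :
    ∃ p ∈ freeSet G u v f, ∃ z, z ∈ p ∧ (z = x ∨ FOrient G u v f z x) := by
  have hS := s15_Suv_empty hG hdom hP
  have huv := hdom.1
  obtain ⟨a, hax⟩ := hin
  have ha_adj : G.Adj a x := hax.1
  have haSu : a ∈ Sside G u v u v := by
    rcases hax.2.1 with ⟨h1, -⟩ | ⟨-, h2⟩
    · exact h1
    · exact absurd h2 (fun hh => s15_SuSv hS hx hh)
  have hux : G.Adj u x := ((s15_mem_Su hP hS).1 hx).1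
  have hxnv : x ≠ v := ((s15_mem_Su hP hS).1 hx).2
  have hua : G.Adj u a := ((s15_mem_Su hP hS).1 haSu).1
  have hxv_nadj : ¬ G.Adj x v := by
    intro h
    exact s15_not_mem_empty hS (show x ∈ Suv G u v from ⟨hux, h.symm⟩)
  have hnotcrit : ¬ CriticalFor G s(u, v) x v := fun hcrit =>
    s15_not_mem_empty hP (show x ∈ Puv G u v from ⟨hux.ne', hxnv, Or.inl hcrit⟩)
  obtain ⟨y, hxy, hyv, hynu⟩ : ∃ y, G.Adj x y ∧ G.Adj y v ∧ y ≠ u := by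
    rw [CriticalFor] at hnotcrit
    push_neg at hnotcrit
    obtain ⟨W, hWlen, hWmem⟩ := hnotcrit hxnv (hG.1 x v)
    rcases s15_walk_shape W hWlen with h0 | ⟨hadj, -⟩ | ⟨m, h1, h2, hE⟩
    · exact absurd h0 hxnv
    · exact absurd hadj hxv_nadj
    · rw [hE] at hWmem
      simp only [List.mem_cons, List.not_mem_nil, or_false] at hWmem
      push_neg at hWmem
      refine ⟨m, h1, h2, ?_⟩
      rintro rfl
      exact hWmem.2 rfl
  have hySv : y ∈ Sside G u v v u := (s15_mem_Sv hP hS).2 ⟨hyv.symm, hynu⟩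
  have hne_ay : a ≠ y := fun h => s15_SuSv hS haSu (by rw [h]; exact hySv)
  have hne_xy : x ≠ y := hxy.ne
  have hne_ax : a ≠ x := ha_adj.ne
  have hay_adj : G.Adj x a := ha_adj.symm
  by_cases hay : G.Adj a y
  · have notxy : ¬ CriticalFor G s(x, y) x y := by
      intro h
      rcases s15_crit_two h hay_adj hay with hE | hE <;> rw [Sym2.eq_iff] at hE
      · rcases hE with ⟨-, hya⟩ | ⟨hxa, -⟩
        · exact hne_ay hya.symm
        · exact hne_ax hxa.symm
      · rcases hE with ⟨hxa, -⟩ | ⟨hxy', -⟩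
        · exact hne_ax hxa.symm
        · exact hne_xy hxy'
    have notyx : ¬ CriticalFor G s(x, y) y x := fun h => notxy (s15_crit_symm h)
    obtain ⟨b₀, c₀, hc₀⟩ := s15_crit_exists hG (G.mem_edgeSet.2 hxy)
    have hsplit : (∃ z, CriticalFor G s(x, y) x z) ∨ (∃ w, CriticalFor G s(x, y) y w) := by
      rcases s15_crit_shape hc₀ with ⟨-, hE⟩ | ⟨m, -, -, hE | hE⟩ <;> rw [Sym2.eq_iff] at hE
      · rcases hE with ⟨hxb, hyc⟩ | ⟨hxc, hyb⟩
        · rw [← hxb, ← hyc] at hc₀; exact absurd hc₀ notxy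
        · rw [← hxc, ← hyb] at hc₀; exact absurd hc₀ notyx
      · rcases hE with ⟨hxb, -⟩ | ⟨-, hyb⟩
        · rw [← hxb] at hc₀; exact Or.inl ⟨c₀, hc₀⟩
        · rw [← hyb] at hc₀; exact Or.inr ⟨c₀, hc₀⟩
      · rcases hE with ⟨-, hyc⟩ | ⟨hxc, -⟩
        · rw [← hyc] at hc₀; exact Or.inr ⟨b₀, s15_crit_symm hc₀⟩
        · rw [← hxc] at hc₀; exact Or.inl ⟨b₀, s15_crit_symm hc₀⟩
    rcases hsplit with ⟨z, hz⟩ | ⟨w, hw⟩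
    · -- LEFT branch: pair (x,z)
      have hz_ne : x ≠ z := hz.1
      have hz_ny : z ≠ y := by
        rintro rfl
        exact notxy hz
      have hnadj_xz : ¬ G.Adj x z := by
        intro h
        have hE := s15_crit_one hz h
        rw [Sym2.eq_iff] at hE
        rcases hE with ⟨-, hyz⟩ | ⟨hxz', -⟩
        · exact hz_ny hyz.symm
        · exact hz_ne hxz'
      have hz_nu : z ≠ u := by
        rintro rfl
        exact hnadj_xz hux.symm
      have hnadj_uz : ¬ G.Adj u z := by
        intro h
        rcases s15_crit_two hz hux.symm h with hE | hE <;> rw [Sym2.eq_iff] at hE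
        · rcases hE with ⟨-, hyu⟩ | ⟨hxu', -⟩
          · exact hynu hyu
          · exact hux.ne' hxu'
        · rcases hE with ⟨hxu', -⟩ | ⟨-, hyu⟩
          · exact hux.ne' hxu'
          · exact hynu hyu
      have hz_nv : z ≠ v := by
        rintro rfl
        rcases s15_crit_two hz hux.symm huv with hE | hE <;> rw [Sym2.eq_iff] at hE
        · rcases hE with ⟨-, hyu⟩ | ⟨hxu', -⟩
          · exact hynu hyu
          · exact hux.ne' hxu'
        · rcases hE with ⟨hxu', -⟩ | ⟨-, hyu⟩
          · exact hux.ne' hxu'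
          · exact hynu hyu
      have hvz : G.Adj v z := by
        rcases hdom.2 z with h | h | h | h
        · exact absurd h hz_nu
        · exact absurd h hz_nv
        · exact absurd h hnadj_uz
        · exact h
      have hzSv : z ∈ Sside G u v v u := (s15_mem_Sv hP hS).2 ⟨hvz, hz_nu⟩
      have hyz : G.Adj y z := by
        rcases s15_crit_shape hz with ⟨hadj, -⟩ | ⟨m, h1, h2, hE | hE⟩
        · exact absurd hadj hnadj_xz
        · rw [Sym2.eq_iff] at hE
          rcases hE with ⟨-, hym⟩ | ⟨-, hyx⟩
          · rw [← hym] at h2; exact h2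
          · exact absurd hyx.symm hne_xy
        · rw [Sym2.eq_iff] at hE
          rcases hE with ⟨-, hyz'⟩ | ⟨hxz', -⟩
          · exact absurd hyz'.symm hz_ny
          · exact absurd hxz' hz_ne
      have hnadj_az : ¬ G.Adj a z := by
        intro h
        rcases s15_crit_two hz hay_adj h with hE | hE <;> rw [Sym2.eq_iff] at hE
        · rcases hE with ⟨-, hya⟩ | ⟨hxa, -⟩
          · exact hne_ay hya.symm
          · exact hne_ax hxa.symm
        · rcases hE with ⟨hxa, -⟩ | ⟨hxz', -⟩
          · exact hne_ax hxa.symm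
          · exact hz_ne hxz'
      have hxX : x ∈ Xset G u v := s15_Su_sub_X hx
      have haX : a ∈ Xset G u v := s15_Su_sub_X haSu
      have hzY : z ∈ Yset G u v := s15_Sv_sub_Y hzSv
      by_cases hfree1 : ∀ e, InnerEdge G u v e → f e ≠ s(x, z)
      · exact ⟨s(x, z), ⟨⟨x, z, hxX, hzY, hnadj_xz, rfl⟩, hfree1⟩, x,
          Sym2.mem_mk_left x z, Or.inl rfl⟩
      · push_neg at hfree1
        obtain ⟨e₁, he₁, hfe₁⟩ := hfree1
        obtain ⟨b₁, c₁, -, -, hfeq₁, hcrit₁, -, -⟩ := hf.2 e₁ he₁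
        rw [hfe₁] at hfeq₁
        rw [Sym2.eq_iff] at hfeq₁
        have hcrit₁' : CriticalFor G e₁ x z := by
          rcases hfeq₁ with ⟨hb, hc⟩ | ⟨hb, hc⟩
          · rw [← hb, ← hc] at hcrit₁; exact hcrit₁
          · rw [← hb, ← hc] at hcrit₁; exact s15_crit_symm hcrit₁
        have he₁eq : e₁ = s(y, z) := by
          rcases s15_crit_two hcrit₁' hxy hyz with h | h
          · exact absurd (by rw [h] at he₁; exact he₁)
              (fun hh => s15_cross_not_inner hP hS hx hySv hh)
          · exact h
        rw [he₁eq] at hfe₁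
        have hfree2 : ∀ e, InnerEdge G u v e → f e ≠ s(a, z) := by
          intro e₂ he₂ hfe₂
          obtain ⟨b₂, c₂, -, -, hfeq₂, hcrit₂, -, -⟩ := hf.2 e₂ he₂
          rw [hfe₂] at hfeq₂
          rw [Sym2.eq_iff] at hfeq₂
          have hcrit₂' : CriticalFor G e₂ a z := by
            rcases hfeq₂ with ⟨hb, hc⟩ | ⟨hb, hc⟩
            · rw [← hb, ← hc] at hcrit₂; exact hcrit₂
            · rw [← hb, ← hc] at hcrit₂; exact s15_crit_symm hcrit₂
          have he₂eq : e₂ = s(y, z) := by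
            rcases s15_crit_two hcrit₂' hay hyz with h | h
            · exact absurd (by rw [h] at he₂; exact he₂)
                (fun hh => s15_cross_not_inner hP hS haSu hySv hh)
            · exact h
          rw [he₂eq] at hfe₂
          rw [hfe₂] at hfe₁
          rw [Sym2.eq_iff] at hfe₁
          rcases hfe₁ with ⟨hax', -⟩ | ⟨-, hzx⟩
          · exact hne_ax hax'
          · exact hz_ne hzx.symm
        exact ⟨s(a, z), ⟨⟨a, z, haX, hzY, hnadj_az, rfl⟩, hfree2⟩, a,
          Sym2.mem_mk_left a z, Or.inr hax⟩
    · -- RIGHT branch: pair (y,w)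
      have hw_ne : y ≠ w := hw.1
      have hw_nx : w ≠ x := by
        rintro rfl
        exact notyx hw
      have hnadj_yw : ¬ G.Adj y w := by
        intro h
        have hE := s15_crit_one hw h
        rw [Sym2.eq_iff] at hE
        rcases hE with ⟨hxy', -⟩ | ⟨hxw', -⟩
        · exact hne_xy hxy'
        · exact hw_nx hxw'.symm
      have hw_nu : w ≠ u := by
        rintro rfl
        rcases s15_crit_two hw hay.symm hua.symm with hE | hE <;> rw [Sym2.eq_iff] at hE
        · rcases hE with ⟨hxy', -⟩ | ⟨hxa, -⟩
          · exact hne_xy hxy'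
          · exact hne_ax hxa.symm
        · rcases hE with ⟨hxa, -⟩ | ⟨hxu', -⟩
          · exact hne_ax hxa.symm
          · exact hux.ne' hxu'
      have hnadj_vw : ¬ G.Adj v w := by
        intro h
        rcases s15_crit_two hw hyv h with hE | hE <;> rw [Sym2.eq_iff] at hE
        · rcases hE with ⟨hxy', -⟩ | ⟨hxv', -⟩
          · exact hne_xy hxy'
          · exact hxnv hxv'
        · rcases hE with ⟨hxv', -⟩ | ⟨hxw', -⟩
          · exact hxnv hxv'
          · exact hw_nx hxw'.symm
      have hw_nv : w ≠ v := by
        rintro rfl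
        exact hnadj_yw hyv
      have huw : G.Adj u w := by
        rcases hdom.2 w with h | h | h | h
        · exact absurd h hw_nu
        · exact absurd h hw_nv
        · exact h
        · exact absurd h hnadj_vw
      have hwSu : w ∈ Sside G u v u v := (s15_mem_Su hP hS).2 ⟨huw, hw_nv⟩
      have hxw : G.Adj x w := by
        rcases s15_crit_shape hw with ⟨hadj, -⟩ | ⟨m, h1, h2, hE | hE⟩
        · exact absurd hadj hnadj_yw
        · rw [Sym2.eq_iff] at hE
          rcases hE with ⟨hxy', -⟩ | ⟨hxm, -⟩
          · exact absurd hxy' hne_xy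
          · rw [← hxm] at h2; exact h2
        · rw [Sym2.eq_iff] at hE
          rcases hE with ⟨-, hyw'⟩ | ⟨hxw', -⟩
          · exact absurd hyw' hw_ne
          · exact absurd hxw'.symm hw_nx
      obtain ⟨hFor, hfree⟩ :=
        s15_lemA hP hS hf hx hwSu hxw hySv hxy (fun h => hnadj_yw h.symm) hout
      exact ⟨s(w, y), hfree, w, Sym2.mem_mk_left w y, Or.inr hFor⟩
  · obtain ⟨-, hfree⟩ := s15_lemA hP hS hf hx haSu hay_adj hySv hxy hay hout
    exact ⟨s(a, y), hfree, a, Sym2.mem_mk_left a y, Or.inr hax⟩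

end S15Main
section S15Symm

variable {V : Type*} {G : SimpleGraph V} {u v : V}

private lemma s15_Puv_comm : Puv G v u = Puv G u v := by
  have hsw : s(v, u) = s(u, v) := Sym2.eq_swap
  ext w
  simp only [Puv, Set.mem_setOf_eq, hsw]
  tauto

private lemma s15_Suv_comm : Suv G v u = Suv G u v := by
  ext w
  simp only [Suv, Set.mem_setOf_eq]
  tauto

private lemma s15_Sside_comm (w w' : V) : Sside G v u w w' = Sside G u v w w' := by
  rw [Sside, Sside, s15_Puv_comm, s15_Suv_comm]

private lemma s15_Xswap (hP : Puv G u v = ∅) (hS : Suv G u v = ∅) :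
    Xset G v u = Yset G u v := by
  rw [Xset, Yset, s15_Sside_comm, s15_Puv_comm, s15_Suv_comm, hP, hS,
    Set.union_empty, Set.union_empty]

private lemma s15_Yswap (hP : Puv G u v = ∅) (hS : Suv G u v = ∅) :
    Yset G v u = Xset G u v := by
  rw [Yset, Xset, s15_Sside_comm, hP, hS, Set.union_empty, Set.union_empty]

private lemma s15_Inner_swap (hP : Puv G u v = ∅) (hS : Suv G u v = ∅) {e : Sym2 V} :
    InnerEdge G v u e ↔ InnerEdge G u v e := by
  rw [InnerEdge, InnerEdge, s15_Xswap hP hS, s15_Yswap hP hS]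
  tauto

private lemma s15_EA_swap (hP : Puv G u v = ∅) (hS : Suv G u v = ∅) {f : Sym2 V → Sym2 V}
    (hf : IsEdgeAssignment G u v f) : IsEdgeAssignment G v u f := by
  constructor
  · have hset : {e | InnerEdge G v u e} = {e | InnerEdge G u v e} :=
      Set.ext (fun e => s15_Inner_swap hP hS)
    rw [hset]
    exact hf.1
  · intro e he
    obtain ⟨b, c, h1, h2, h3, h4, h5, h6⟩ := hf.2 e ((s15_Inner_swap hP hS).1 he)
    refine ⟨b, c, h1, h2, h3, h4, ?_, ?_⟩
    · intro hall
      rw [s15_Xswap hP hS] at hall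
      rw [s15_Xswap hP hS, s15_Yswap hP hS]
      exact ⟨(h6 hall).1, (h6 hall).2⟩
    · intro hall
      rw [s15_Yswap hP hS] at hall
      rw [s15_Xswap hP hS, s15_Yswap hP hS]
      exact ⟨(h5 hall).1, (h5 hall).2⟩

private lemma s15_FOrient_swap {f : Sym2 V → Sym2 V} {a b : V} :
    FOrient G v u f a b ↔ FOrient G u v f a b := by
  rw [FOrient, FOrient, s15_Sside_comm v u, s15_Sside_comm u v]
  tauto

private lemma s15_freeSet_swap (hP : Puv G u v = ∅) (hS : Suv G u v = ∅)
    {f : Sym2 V → Sym2 V} : freeSet G v u f = freeSet G u v f := by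
  ext p
  simp only [freeSet, Set.mem_setOf_eq]
  constructor
  · rintro ⟨⟨b, c, hb, hc, hn, rfl⟩, h2⟩
    rw [s15_Xswap hP hS] at hb
    rw [s15_Yswap hP hS] at hc
    exact ⟨⟨c, b, hc, hb, fun h => hn h.symm, Sym2.eq_swap⟩,
      fun e he => h2 e ((s15_Inner_swap hP hS).2 he)⟩
  · rintro ⟨⟨b, c, hb, hc, hn, rfl⟩, h2⟩
    rw [← s15_Yswap hP hS] at hb
    rw [← s15_Xswap hP hS] at hc
    exact ⟨⟨c, b, hc, hb, fun h => hn h.symm, Sym2.eq_swap⟩,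
      fun e he => h2 e ((s15_Inner_swap hP hS).1 he)⟩

private lemma s15_dom_swap (hdom : IsDominatingEdge G u v) : IsDominatingEdge G v u := by
  refine ⟨hdom.1.symm, fun w => ?_⟩
  rcases hdom.2 w with h | h | h | h
  · exact Or.inr (Or.inl h)
  · exact Or.inl h
  · exact Or.inr (Or.inr (Or.inr h))
  · exact Or.inr (Or.inr (Or.inl h))

end S15Symm

/-- a sink `x` of the `f`-orientation has an `f`-free pair containing a
vertex of its closed in-neighbourhood `N⁻[x]`. -/
theorem statement15 {V : Type*} (G : SimpleGraph V) (u v : V)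
    (hG : IsD2C G) (hdom : IsDominatingEdge G u v) (hP : Puv G u v = ∅)
    (f : Sym2 V → Sym2 V) (hf : IsEdgeAssignment G u v f)
    (x : V) (hx : x ∈ Sside G u v u v ∪ Sside G u v v u)
    (hin : ∃ a, FOrient G u v f a x) (hout : ∀ b, ¬ FOrient G u v f x b) :
    ∃ p ∈ freeSet G u v f, ∃ z, z ∈ p ∧ (z = x ∨ FOrient G u v f z x) := by
  rcases hx with hxu | hxv
  · exact s15_mainSu hG hdom hP hf hxu hin hout
  · have hS := s15_Suv_empty hG hdom hP
    have hP' : Puv G v u = ∅ := by rw [s15_Puv_comm]; exact hP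
    have hdom' := s15_dom_swap hdom
    have hf' := s15_EA_swap hP hS hf
    have hx' : x ∈ Sside G v u v u := by rw [s15_Sside_comm]; exact hxv
    have hin' : ∃ a, FOrient G v u f a x := by
      obtain ⟨a, ha⟩ := hin
      exact ⟨a, s15_FOrient_swap.2 ha⟩
    have hout' : ∀ b, ¬ FOrient G v u f x b := fun b hb => hout b (s15_FOrient_swap.1 hb)
    obtain ⟨p, hp, z, hzp, hzor⟩ := s15_mainSu hG hdom' hP' hf' hx' hin' hout'
    rw [s15_freeSet_swap hP hS] at hp
    refine ⟨p, hp, z, hzp, ?_⟩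
    rcases hzor with h | h
    · exact Or.inl h
    · exact Or.inr (s15_FOrient_swap.1 h)
end
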